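/- arXiv:2501.01667 — 11 statements merged into one kernel-verified Lean document; each statement's English description precedes it below -/
import Mathlib

section
/- For every odd prime p, P_p ≡ 2^{(p-1)/2} (mod p), and hence P_p is congruent modulo p to the Legendre symbol (2/p). -/
/-- The Pell sequence: `P 0 = 0`, `P 1 = 1`, `P (i+2) = 2 * P (i+1) + P i`. -/
def pell : ℕ → ℕ
  | 0 => 0
  | 1 => 1
  | (i + 2) => 2 * pell (i + 1) + pell i

/-- The "half-companion" part: `(1+√2)^n = pH n + pB n · √2`. -/
def pH (n : ℕ) : ℕ := ∑ k ∈ Finset.range (n+1), n.choose (2*k) * 2^k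

def pB (n : ℕ) : ℕ := ∑ k ∈ Finset.range (n+1), n.choose (2*k+1) * 2^k

lemma pB_succ (n : ℕ) : pB (n+1) = pH n + pB n := by
  unfold pB pH
  rw [Finset.sum_range_succ]
  have h0 : (n+1).choose (2*(n+1)+1) = 0 := Nat.choose_eq_zero_of_lt (by omega)
  rw [h0]
  simp only [Nat.zero_mul, Nat.mul_zero, zero_mul, add_zero]
  rw [← Finset.sum_add_distrib]
  apply Finset.sum_congr rfl
  intro k _
  have : (n+1).choose (2*k+1) = n.choose (2*k) + n.choose (2*k+1) :=
    Nat.choose_succ_succ n (2*k)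
  rw [this, add_mul]

lemma pH_succ (n : ℕ) : pH (n+1) = pH n + 2 * pB n := by
  unfold pB pH
  rw [Finset.sum_range_succ' (fun k => (n+1).choose (2*k) * 2^k)]
  simp only [Nat.mul_zero, Nat.choose_zero_right, pow_zero, mul_one]
  have key : ∀ k, (n+1).choose (2*(k+1)) = n.choose (2*k+1) + n.choose (2*k+2) := by
    intro k
    have : 2*(k+1) = (2*k+1) + 1 := by ring
    rw [this]
    exact Nat.choose_succ_succ n (2*k+1)
  have : ∑ k ∈ Finset.range (n+1), (n+1).choose (2*(k+1)) * 2^(k+1)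
      = ∑ k ∈ Finset.range (n+1), (n.choose (2*k+1) * 2^(k+1) + n.choose (2*k+2) * 2^(k+1)) := by
    apply Finset.sum_congr rfl
    intro k _
    rw [key k, add_mul]
  rw [this, Finset.sum_add_distrib]
  have h1 : ∑ k ∈ Finset.range (n+1), n.choose (2*k+1) * 2^(k+1)
      = 2 * ∑ k ∈ Finset.range (n+1), n.choose (2*k+1) * 2^k := by
    rw [Finset.mul_sum]
    apply Finset.sum_congr rfl
    intro k _
    ring
  have h2 : ∑ k ∈ Finset.range (n+1), n.choose (2*k+2) * 2^(k+1)
      = ∑ k ∈ Finset.range (n+1), n.choose (2*k) * 2^k - 1 := by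
    rw [Finset.sum_range_succ]
    have hz : n.choose (2*(n+1)) = 0 := Nat.choose_eq_zero_of_lt (by omega)
    have : 2*(n+1) = 2*n+2 := by ring
    rw [this] at hz
    rw [hz, zero_mul, add_zero]
    rw [Finset.sum_range_succ' (fun k => n.choose (2*k) * 2^k)]
    simp only [Nat.mul_zero, Nat.choose_zero_right, pow_zero, mul_one]
    have : ∀ k, 2*(k+1) = 2*k+2 := fun k => by ring
    simp only [this]
    omega
  rw [h1, h2]
  have hpos : 1 ≤ ∑ k ∈ Finset.range (n+1), n.choose (2*k) * 2^k := by
    calc 1 = n.choose (2*0) * 2^0 := by simp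
    _ ≤ _ := Finset.single_le_sum (f := fun k => n.choose (2*k) * 2^k)
        (fun _ _ => Nat.zero_le _) (Finset.mem_range.mpr (by omega))
  omega

lemma pell_eq_pB : ∀ n, pell n = pB n ∧ pell (n+1) = pB n + pH n := by
  intro n
  induction n with
  | zero => constructor <;> decide
  | succ m ih =>
    obtain ⟨h1, h2⟩ := ih
    constructor
    · rw [h2, pB_succ, add_comm]
    · show pell (m+2) = pB (m+1) + pH (m+1)
      rw [show pell (m+2) = 2 * pell (m+1) + pell m from rfl, h1, h2, pB_succ, pH_succ]
      ring

theorem pell_p_congr (p : ℕ) [hp : Fact p.Prime] (hodd : p ≠ 2) :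
    (pell p : ZMod p) = 2 ^ ((p - 1) / 2) ∧ (pell p : ZMod p) = (legendreSym p 2 : ZMod p) := by
  have hop : Odd p := hp.out.odd_of_ne_two hodd
  obtain ⟨q, hq⟩ := hop
  have hq2 : (p - 1) / 2 = q := by omega
  have hmain : (pell p : ZMod p) = 2 ^ q := by
    rw [(pell_eq_pB p).1]
    unfold pB
    push_cast
    rw [Finset.sum_eq_single q]
    · have : p.choose (2*q+1) = 1 := by rw [← hq]; exact Nat.choose_self p
      rw [this]; push_cast; ring
    · intro b _ hb
      have h2b : 2*b+1 ≠ p := by omega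
      rcases lt_or_gt_of_ne h2b with h | h
      · have hdvd : p ∣ p.choose (2*b+1) := hp.out.dvd_choose_self (by omega) h
        have : ((p.choose (2*b+1) : ℕ) : ZMod p) = 0 :=
          (ZMod.natCast_eq_zero_iff _ _).mpr hdvd
        rw [this, zero_mul]
      · rw [Nat.choose_eq_zero_of_lt h]; push_cast; ring
    · intro hq'
      exact absurd (Finset.mem_range.mpr (by omega)) hq'
  constructor
  · rw [hmain, hq2]
  · rw [hmain, legendreSym.eq_pow]
    have : p / 2 = q := by
      have := hp.out.two_le; omega
    rw [this]
    push_cast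
    ring
end

section
/- Let q = 2n+1 ≥ 5 be an odd prime power with characteristic p, and let s_1 = 1, s_2, …, s_n be the nonzero squares of F_q. Then (-1)^{(n-1)(n-2)/2} · ∏_{2 ≤ i < j ≤ n} (s_j - s_i)^2 = (-1/2)^{n-2} in F_q. -/
/-!
The nonzero squares of `F_q` are the `n` roots of `X ^ n - 1`, so the `s_i` are the roots of
`(X ^ n - 1) / (X - 1)`. For a root `a` of `X ^ n - 1`, the product `∏_{b ≠ a} (a - b)` is the
derivative `n a ^ (n - 1)` at `a`, i.e. `a * ∏_{b ≠ a} (a - b) = n`. At `a = 1` this gives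
`∏ (1 - s_i) = n`, and at `a = s_i` it gives `s_i (s_i - 1) ∏_{j ≠ i} (s_i - s_j) = n`; since the
constant term yields `∏ (-s_i) = 1`, the product over ordered pairs is `n ^ (n - 2)`, and
`n = -1/2` in `F_q`. The sign `(-1) ^ ((n - 1) choose 2)` is what turns that product into the
product of squares over increasing pairs.
-/

open Finset Polynomial

namespace Finset

variable {ι M : Type*} [CommMonoid M]

theorem prod_offDiag_eq_prod_prod_erase [DecidableEq ι] (s : Finset ι) (g : ι × ι → M) :
    ∏ p ∈ s.offDiag, g p = ∏ a ∈ s, ∏ b ∈ s.erase a, g (a, b) :=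
  prod_finset_product _ _ _ fun p => by simp [and_comm, ne_comm]

theorem prod_offDiag_eq_prod_filter_lt_mul_swap [LinearOrder ι] (s : Finset ι) (g : ι × ι → M) :
    ∏ p ∈ s.offDiag, g p = ∏ p ∈ s ×ˢ s with p.1 < p.2, g p * g p.swap := by
  have hsplit : s.offDiag = {p ∈ s ×ˢ s | p.1 < p.2} ∪ {p ∈ s ×ˢ s | p.2 < p.1} := by
    ext p; simp only [mem_offDiag, mem_union, mem_filter, mem_product]; grind
  have hdisj : Disjoint {p ∈ s ×ˢ s | p.1 < p.2} {p ∈ s ×ˢ s | p.2 < p.1} := by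
    simp only [disjoint_left, mem_filter]; grind
  rw [hsplit, prod_union hdisj, prod_mul_distrib]
  congr 1
  exact prod_nbij' Prod.swap Prod.swap (by simp +contextual) (by simp +contextual)
    (by simp) (by simp) (by simp)

theorem prod_offDiag_map {κ : Type*} [DecidableEq ι] [DecidableEq κ] (s : Finset ι) (f : ι ↪ κ)
    (g : κ × κ → M) : ∏ p ∈ (s.map f).offDiag, g p = ∏ p ∈ s.offDiag, g (f p.1, f p.2) := by
  simp only [prod_offDiag_eq_prod_prod_erase, prod_map, ← map_erase]

theorem prod_offDiag_sub_eq_neg_one_pow_mul_prod_sq {R : Type*} [CommRing R] [LinearOrder ι]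
    (s : Finset ι) (f : ι → R) :
    ∏ p ∈ s.offDiag, (f p.1 - f p.2) =
      (-1) ^ (#s).choose 2 * ∏ p ∈ s ×ˢ s with p.1 < p.2, (f p.2 - f p.1) ^ 2 := by
  rw [prod_offDiag_eq_prod_filter_lt_mul_swap, ← card_product_filter_lt, ← prod_const,
    ← prod_mul_distrib]
  exact prod_congr rfl fun p _ => by simp only [Prod.fst_swap, Prod.snd_swap]; ring

end Finset

namespace Polynomial

variable {K : Type*} [Field K]

theorem prod_X_sub_C_eq_of_isRoot {p : K[X]} (hp : p.Monic) {T : Finset K}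
    (hroot : ∀ c ∈ T, p.IsRoot c) (hcard : #T = p.natDegree) : ∏ c ∈ T, (X - C c) = p := by
  have hle : T.val ≤ p.roots :=
    (Multiset.le_iff_subset T.nodup).2 fun c hc => (mem_roots hp.ne_zero).2 (hroot c hc)
  have hroots : T.val = p.roots :=
    Multiset.eq_of_le_of_card_le hle (by simpa [hcard] using card_roots' p)
  rw [prod_eq_multiset_prod, hroots,
    prod_multiset_X_sub_C_of_monic_of_roots_card_eq hp (hroots ▸ hcard)]

variable {T : Finset K} {n : ℕ}

theorem mul_prod_erase_sub_of_prod_X_sub_C_eq [DecidableEq K]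
    (hT : ∏ c ∈ T, (X - C c) = X ^ n - 1) {a : K} (ha : a ∈ T) :
    a * ∏ b ∈ T.erase a, (a - b) = n := by
  have hderiv : ∏ b ∈ T.erase a, (a - b) = n * a ^ (n - 1) := by
    rw [prod_eq_multiset_prod, erase_val, ← eval_multiset_prod_X_sub_C_derivative ha,
      ← prod_eq_multiset_prod, hT]
    simp [derivative_X_pow]
  have hroot : a ^ n = 1 := by
    have := congrArg (eval a) hT
    rw [eval_prod, prod_eq_zero ha (by simp), eval_sub, eval_pow, eval_X, eval_one] at this
    exact (sub_eq_zero.1 this.symm)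
  rw [hderiv]
  rcases n with _ | n
  · simp
  · rw [add_tsub_cancel_right, mul_left_comm, ← pow_succ', hroot, mul_one]

theorem prod_neg_of_prod_X_sub_C_eq (hT : ∏ c ∈ T, (X - C c) = X ^ n - 1) :
    ∏ c ∈ T, -c = -1 := by
  have hn : n ≠ 0 := by
    rintro rfl
    simp [prod_eq_zero_iff, X_sub_C_ne_zero] at hT
  simpa [eval_prod, hn] using congrArg (eval 0) hT

theorem prod_offDiag_sub_of_prod_insert_one_X_sub_C_eq [DecidableEq K] {S : Finset K}
    (h1 : (1 : K) ∉ S) (hS : ∏ c ∈ insert 1 S, (X - C c) = X ^ n - 1) :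
    ∏ p ∈ S.offDiag, (p.1 - p.2) = (n : K) ^ (n - 2) := by
  have hcard : #S + 1 = n := by
    have := congrArg natDegree hS
    rwa [natDegree_finsetProd_X_sub_C_eq_card, card_insert_of_notMem h1, ← C_1,
      natDegree_X_pow_sub_C] at this
  have hone : ∏ b ∈ S, (1 - b) = n := by
    simpa [erase_insert h1] using mul_prod_erase_sub_of_prod_X_sub_C_eq hS (mem_insert_self 1 S)
  have hn0 : (n : K) ≠ 0 :=
    hone ▸ prod_ne_zero_iff.2 fun b hb => sub_ne_zero.2 (ne_of_mem_of_not_mem hb h1).symm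
  have hneg : ∏ a ∈ S, -a = 1 := by
    simpa [prod_insert h1] using prod_neg_of_prod_X_sub_C_eq hS
  have hpoint : ∀ a ∈ S, -a * (1 - a) * ∏ b ∈ S.erase a, (a - b) = n := by
    intro a ha
    have h1a : (1 : K) ∉ S.erase a := fun h => h1 (mem_of_mem_erase h)
    have := mul_prod_erase_sub_of_prod_X_sub_C_eq hS (mem_insert_of_mem ha)
    rw [erase_insert_of_ne (ne_of_mem_of_not_mem ha h1).symm, prod_insert h1a] at this
    linear_combination this
  have hprod : n * ∏ p ∈ S.offDiag, (p.1 - p.2) = (n : K) ^ #S := by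
    calc (n : K) * ∏ p ∈ S.offDiag, (p.1 - p.2)
        = ∏ a ∈ S, (-a * (1 - a) * ∏ b ∈ S.erase a, (a - b)) := by
          rw [prod_mul_distrib, prod_mul_distrib, hneg, hone, one_mul,
            prod_offDiag_eq_prod_prod_erase]
      _ = (n : K) ^ #S := by rw [prod_congr rfl hpoint, prod_const]
  refine mul_left_cancel₀ hn0 (hprod.trans ?_)
  rw [← hcard]
  rcases #S with _ | m
  · simp
  · rw [show m + 1 + 1 - 2 = m by omega, pow_succ']

end Polynomial

namespace FiniteField

variable {F : Type*} [Field F] [Fintype F] {n : ℕ}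

theorem ne_zero_of_card_eq (hcard : Fintype.card F = 2 * n + 1) : n ≠ 0 := by
  rintro rfl
  exact Fintype.one_lt_card.ne' (by simpa using hcard)

theorem pow_eq_one_of_isSquare (hcard : Fintype.card F = 2 * n + 1) {c : F} (hc : IsSquare c)
    (hc0 : c ≠ 0) : c ^ n = 1 := by
  obtain ⟨x, rfl⟩ := hc
  have hx0 : x ≠ 0 := by rintro rfl; simp at hc0
  simpa [hcard, ← sq, ← pow_mul] using pow_card_sub_one_eq_one x hx0

theorem natCast_eq_neg_one_div_two (hcard : Fintype.card F = 2 * n + 1) : (n : F) = -1 / 2 := by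
  have hq : (2 : F) * n + 1 = 0 := by exact_mod_cast hcard ▸ cast_card_eq_zero F
  have h2 : (2 : F) ≠ 0 := by rintro h; simp [h] at hq
  field_simp
  linear_combination hq

theorem prod_X_sub_C_eq_X_pow_sub_one (hcard : Fintype.card F = 2 * n + 1) {T : Finset F}
    (hT : ∀ c ∈ T, IsSquare c ∧ c ≠ 0) (hTcard : #T = n) : ∏ c ∈ T, (X - C c) = X ^ n - 1 := by
  refine prod_X_sub_C_eq_of_isRoot
    (by simpa using monic_X_pow_sub_C (1 : F) (ne_zero_of_card_eq hcard)) ?_ ?_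
  · intro c hc
    rw [IsRoot, eval_sub, eval_pow, eval_X, eval_one, sub_eq_zero]
    exact pow_eq_one_of_isSquare hcard (hT c hc).1 (hT c hc).2
  · rw [hTcard, ← C_1, natDegree_X_pow_sub_C]

end FiniteField

open FiniteField in
theorem prod_sq_diff_squares_general (F : Type*) [Field F] [Fintype F] (n : ℕ)
    (hcard : Fintype.card F = 2 * n + 1)
    (s : Fin (n - 1) → F) (hinj : Function.Injective s)
    (hrange : ∀ x : F, (∃ i, s i = x) ↔ (IsSquare x ∧ x ≠ 0 ∧ x ≠ 1)) :
    (-1 : F) ^ ((n - 1) * (n - 2) / 2) *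
      ∏ p ∈ Finset.univ.filter (fun p : Fin (n - 1) × Fin (n - 1) => p.1 < p.2),
        (s p.2 - s p.1) ^ 2
      = (-1 / 2 : F) ^ (n - 2) := by
  classical
  set S := univ.map ⟨s, hinj⟩
  have hmem : ∀ x, x ∈ S ↔ IsSquare x ∧ x ≠ 0 ∧ x ≠ 1 := by simpa [S] using hrange
  have h1 : (1 : F) ∉ S := by simp [hmem]
  have hroots : ∏ c ∈ insert 1 S, (X - C c) = X ^ n - 1 := by
    refine prod_X_sub_C_eq_X_pow_sub_one hcard (fun c hc => ?_) ?_
    · rcases mem_insert.1 hc with rfl | hc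
      · exact ⟨IsSquare.one, one_ne_zero⟩
      · exact ⟨((hmem c).1 hc).1, ((hmem c).1 hc).2.1⟩
    · rw [card_insert_of_notMem h1, card_map, card_fin]
      have := ne_zero_of_card_eq hcard
      omega
  have hpairs := prod_offDiag_sub_eq_neg_one_pow_mul_prod_sq univ s
  rw [card_fin, univ_product_univ, Nat.choose_two_right, Nat.sub_sub] at hpairs
  calc _ = ∏ p ∈ (univ : Finset (Fin (n - 1))).offDiag, (s p.1 - s p.2) := hpairs.symm
    _ = ∏ p ∈ S.offDiag, (p.1 - p.2) := by rw [prod_offDiag_map]; rfl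
    _ = (n : F) ^ (n - 2) := prod_offDiag_sub_of_prod_insert_one_X_sub_C_eq h1 hroots
    _ = _ := by rw [natCast_eq_neg_one_div_two hcard]

theorem prod_sq_diff_squares (F : Type*) [Field F] [Fintype F] (n : ℕ)
    (hcard : Fintype.card F = 2 * n + 1) (h5 : 5 ≤ Fintype.card F)
    (s : Fin (n - 1) → F) (hinj : Function.Injective s)
    (hrange : ∀ x : F, (∃ i, s i = x) ↔ (IsSquare x ∧ x ≠ 0 ∧ x ≠ 1)) :
    (-1 : F) ^ ((n - 1) * (n - 2) / 2) *
      ∏ p ∈ Finset.univ.filter (fun p : Fin (n - 1) × Fin (n - 1) => p.1 < p.2),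
        (s p.2 - s p.1) ^ 2
      = (-1 / 2 : F) ^ (n - 2) :=
  prod_sq_diff_squares_general F n hcard s hinj hrange
end

section
/- Let l be a positive integer and x_1,…,x_l, y_1,…,y_l be elements of a commutative ring. Then det[(x_i + y_j)^l]_{1≤i,j≤l} = (-1)^{l(l-1)/2} · ∏_{1≤i<j≤l}(x_j - x_i)(y_j - y_i) · Σ_{k=0}^{l} U_k, where U_k = σ_k(x_1,…,x_l)·σ_{l-k}(y_1,…,y_l)·∏_{r∈[0,l]∖{k}} C(l,r). -/
/-!
Expanding `(x_i + y_j)^l` binomially factors the matrix as `A * B`, with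
`A i c = C(l,c) x_i^(l-c)` of size `l × (l+1)` and `B c j = y_j^c`. By Cauchy–Binet,
`det (A * B)` is the sum over the deleted index `k` of the products of maximal minors.
Deleting the power `k` from a Vandermonde matrix multiplies its determinant by an elementary
symmetric function (read off as the coefficient of `X^k` in the Vandermonde determinant of
`(-X, x_1, …, x_l)`); the minors of `A` list the powers in decreasing order, which costs the
sign of the reversal of `Fin l`.
-/

open Finset Function Matrix Equiv Polynomial

namespace Fin

theorem sign_revPerm (n : ℕ) :
    Perm.sign (revPerm : Perm (Fin n)) = (-1) ^ (n * (n - 1) / 2) := by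
  rw [Perm.sign_eq_prod_prod_Ioi]
  have hterm (i : Fin n) : ∏ j ∈ Ioi i, (if revPerm i < revPerm j then 1 else -1 : ℤˣ)
      = (-1) ^ (n - 1 - i : ℕ) := by
    rw [prod_congr rfl fun j hj => if_neg (by simpa using (mem_Ioi.mp hj).le),
      Finset.prod_const, card_Ioi]
  simp_rw [hterm, prod_pow_eq_pow_sum, sum_univ_eq_sum_range (fun i => n - 1 - i),
    sum_range_reflect (fun i => i) n, sum_range_id]

theorem prod_succAbove_eq_prod_range_erase {M : Type*} [CommMonoid M] {n : ℕ} (f : ℕ → M)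
    (k : Fin (n + 1)) :
    ∏ j : Fin n, f (k.succAbove j) = ∏ r ∈ (range (n + 1)).erase k, f r := by
  refine prod_nbij (fun j => k.succAbove j) (fun j _ => ?_) (fun i _ j _ h => ?_)
    (fun r hr => ?_) fun _ _ => rfl
  · exact mem_erase.mpr
      ⟨val_injective.ne (succAbove_ne k j), mem_range.mpr (k.succAbove j).isLt⟩
  · exact succAbove_right_injective (Fin.ext h)
  · obtain ⟨hrk, hr⟩ := mem_erase.mp hr
    obtain ⟨j, hj⟩ := exists_succAbove_eq (x := ⟨r, mem_range.mp hr⟩) (y := k)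
      fun h => hrk (congrArg val h)
    exact ⟨j, mem_coe.mpr (mem_univ j), congrArg val hj⟩

theorem exists_succAbove_comp_perm_of_injective {n : ℕ} {r : Fin n → Fin (n + 1)}
    (hr : Injective r) : ∃ k : Fin (n + 1), ∃ τ : Perm (Fin n), k.succAbove ∘ τ = r := by
  obtain ⟨k, hk⟩ : ∃ k, ∀ i, r i ≠ k := by
    by_contra! h
    simpa using Fintype.card_le_of_surjective r fun k => (h k).imp fun _ => id
  choose q hq using fun i => exists_succAbove_eq (hk i)
  have hq_inj : Injective q := fun i j h => hr (by rw [← hq i, ← hq j, h])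
  exact ⟨k, Equiv.ofBijective q (Finite.injective_iff_bijective.mp hq_inj), funext hq⟩

theorem succAbove_comp_perm_injective {n : ℕ} :
    Injective fun q : Fin (n + 1) × Perm (Fin n) => q.1.succAbove ∘ q.2 := by
  rintro ⟨k, τ⟩ ⟨k', τ'⟩ h
  obtain rfl : k = k' := by
    have hrange := congrArg Set.range h
    simp only [Set.range_comp, EquivLike.range_eq_univ, Set.image_univ, range_succAbove]
      at hrange
    simpa using hrange
  exact Prod.ext rfl (Equiv.ext fun i => succAbove_right_injective (congrFun h i))

theorem sum_fun_eq_sum_succAbove_perm {M : Type*} [AddCommMonoid M] {n : ℕ}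
    (F : (Fin n → Fin (n + 1)) → M) (hF : ∀ r, ¬ Injective r → F r = 0) :
    ∑ r, F r = ∑ k : Fin (n + 1), ∑ τ : Perm (Fin n), F (k.succAbove ∘ τ) := by
  classical
  rw [← Fintype.sum_prod_type',
    ← sum_image fun q _ q' _ h => succAbove_comp_perm_injective h]
  refine (sum_subset (subset_univ _) fun r _ hr => hF r fun hr_inj => hr ?_).symm
  obtain ⟨k, τ, rfl⟩ := exists_succAbove_comp_perm_of_injective hr_inj
  exact mem_image_of_mem _ (mem_univ (k, τ))

end Fin

namespace Matrix

variable {R : Type*} [CommRing R]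

theorem det_mul_eq_sum_prod_mul_det_submatrix {m n : Type*} [Fintype m] [DecidableEq m]
    [Fintype n] [DecidableEq n] (A : Matrix m n R) (B : Matrix n m R) :
    (A * B).det = ∑ r : m → n, (∏ i, A i (r i)) * (B.submatrix r id).det := by
  have hrows : A * B = fun i => ∑ c, A i c • B c := by
    ext i j
    simp [mul_apply]
  have hexpand := (detRowAlternating (R := R) (n := m)).toMultilinearMap.map_sum
    fun i c => A i c • B c
  simp only [AlternatingMap.coe_multilinearMap, ← hrows] at hexpand
  rw [det, hexpand]
  refine sum_congr rfl fun r _ => ?_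
  rw [AlternatingMap.map_smul_univ]
  rfl

theorem det_mul_eq_sum_det_submatrix_succAbove {n : ℕ} (A : Matrix (Fin n) (Fin (n + 1)) R)
    (B : Matrix (Fin (n + 1)) (Fin n) R) :
    (A * B).det = ∑ k : Fin (n + 1),
      (A.submatrix id k.succAbove).det * (B.submatrix k.succAbove id).det := by
  rw [det_mul_eq_sum_prod_mul_det_submatrix, Fin.sum_fun_eq_sum_succAbove_perm]
  · refine sum_congr rfl fun k _ => ?_
    have hperm (τ : Perm (Fin n)) : B.submatrix (k.succAbove ∘ τ) id
        = (B.submatrix k.succAbove id).submatrix τ id := rfl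
    simp_rw [hperm, det_permute]
    rw [← det_transpose (A.submatrix id k.succAbove), det_apply' (A.submatrix id k.succAbove)ᵀ,
      sum_mul]
    refine sum_congr rfl fun τ _ => ?_
    simp only [Function.comp_apply, transpose_apply, submatrix_apply, id]
    ring
  · intro r hr
    obtain ⟨i, j, hij, hne⟩ := Function.not_injective_iff.mp hr
    rw [det_zero_of_row_eq hne (congrArg B hij), mul_zero]

theorem det_vandermonde_cons_neg_X {n : ℕ} (v : Fin n → R) :
    (vandermonde (Fin.cons (-X) fun i => C (v i) : Fin (n + 1) → R[X])).det
      = (∏ i, (X + C (v i))) * C (vandermonde v).det := by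
  simp only [det_vandermonde, Fin.prod_univ_succ, Fin.prod_Ioi_zero, Fin.prod_Ioi_succ,
    Fin.cons_zero, Fin.cons_succ, sub_neg_eq_add, map_prod, map_sub, add_comm]

theorem det_vandermonde_cons_neg_X_eq_sum {n : ℕ} (v : Fin n → R) :
    (vandermonde (Fin.cons (-X) fun i => C (v i) : Fin (n + 1) → R[X])).det
      = ∑ k : Fin (n + 1),
          C (of fun i j : Fin n => v i ^ (k.succAbove j : ℕ)).det * X ^ (k : ℕ) := by
  rw [det_succ_row_zero]
  refine sum_congr rfl fun k _ => ?_
  have hminor : (vandermonde (Fin.cons (-X) fun i => C (v i) : Fin (n + 1) → R[X])).submatrix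
      Fin.succ k.succAbove
        = (C : R →+* R[X]).mapMatrix (of fun i j : Fin n => v i ^ (k.succAbove j : ℕ)) := by
    refine Matrix.ext fun i j => ?_
    simp only [submatrix_apply, vandermonde_apply, Fin.cons_succ, RingHom.mapMatrix_apply,
      map_apply, of_apply, map_pow]
  rw [hminor, ← RingHom.map_det, vandermonde_apply, Fin.cons_zero, ← mul_pow, neg_one_mul,
    neg_neg, mul_comm]

theorem det_of_pow_succAbove {n : ℕ} (v : Fin n → R) (k : Fin (n + 1)) :
    (of fun i j : Fin n => v i ^ (k.succAbove j : ℕ)).det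
      = (vandermonde v).det * (univ.val.map v).esymm (n - k) := by
  have h := congrArg (coeff · k) ((det_vandermonde_cons_neg_X_eq_sum v).symm.trans
    (det_vandermonde_cons_neg_X v))
  simp only [finsetSum_coeff, coeff_C_mul_X_pow] at h
  rw [sum_eq_single k (fun j _ hj => if_neg (Fin.val_injective.ne hj).symm) (by simp),
    if_pos rfl, coeff_mul_C] at h
  rw [h, mul_comm]
  congr 1
  exact (Multiset.prod_X_add_C_coeff' univ.val v (by simpa using k.is_le)).trans (by simp)

theorem det_of_pow_sub_succAbove {n : ℕ} (v : Fin n → R) (k : Fin (n + 1)) :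
    (of fun i j : Fin n => v i ^ (n - k.succAbove j : ℕ)).det
      = (-1) ^ (n * (n - 1) / 2) * (vandermonde v).det * (univ.val.map v).esymm k := by
  have hrev : (of fun i j : Fin n => v i ^ (n - k.succAbove j : ℕ))
      = (of fun i j : Fin n => v i ^ (k.rev.succAbove j : ℕ)).submatrix id Fin.revPerm := by
    ext i j
    simp only [of_apply, submatrix_apply, id, Fin.revPerm_apply, ← Fin.rev_succAbove,
      Fin.val_rev, Nat.add_sub_add_right]
  rw [hrev, det_permute', Fin.sign_revPerm, det_of_pow_succAbove, Fin.val_rev,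
    Nat.add_sub_add_right, Nat.sub_sub_self k.is_le]
  push_cast
  ring

theorem det_vandermonde_eq_prod_filter_lt {n : ℕ} (v : Fin n → R) :
    (vandermonde v).det
      = ∏ p ∈ univ.filter (fun p : Fin n × Fin n => p.1 < p.2), (v p.2 - v p.1) := by
  rw [det_vandermonde, prod_filter, ← univ_product_univ, prod_product]
  exact prod_congr rfl fun i _ => by rw [← prod_filter, filter_lt_eq_Ioi]

theorem of_add_pow_eq_mul {m : Type*} (x y : m → R) (n : ℕ) :
    of (fun i j => (x i + y j) ^ n)
      = of (fun i (c : Fin (n + 1)) => (n.choose c : R) * x i ^ (n - c))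
        * of fun (c : Fin (n + 1)) j => y j ^ (c : ℕ) := by
  ext i j
  rw [mul_apply, of_apply, add_comm, add_pow, ← Fin.sum_univ_eq_sum_range]
  exact sum_congr rfl fun c _ => by simp only [of_apply]; ring

end Matrix

theorem det_add_pow_l_general (R : Type*) [CommRing R] (l : ℕ) (x y : Fin l → R) :
    (Matrix.of fun i j : Fin l => (x i + y j) ^ l).det =
      (-1 : R) ^ (l * (l - 1) / 2) *
        (∏ p ∈ Finset.univ.filter (fun p : Fin l × Fin l => p.1 < p.2),
          (x p.2 - x p.1) * (y p.2 - y p.1)) *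
        ∑ k ∈ Finset.range (l + 1),
          (Multiset.map x Finset.univ.val).esymm k *
            (Multiset.map y Finset.univ.val).esymm (l - k) *
            ∏ r ∈ (Finset.range (l + 1)).erase k, (Nat.choose l r : R) := by
  have hminorA (k : Fin (l + 1)) :
      ((of fun i (c : Fin (l + 1)) => (l.choose c : R) * x i ^ (l - c)).submatrix
        id k.succAbove).det
        = (∏ r ∈ (range (l + 1)).erase k, (l.choose r : R))
          * ((-1) ^ (l * (l - 1) / 2) * (vandermonde x).det * (univ.val.map x).esymm k) := by
    rw [← Fin.prod_succAbove_eq_prod_range_erase, ← det_of_pow_sub_succAbove, ← det_mul_row]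
    rfl
  have hminorB (k : Fin (l + 1)) :
      ((of fun (c : Fin (l + 1)) j => y j ^ (c : ℕ)).submatrix k.succAbove id).det
        = (vandermonde y).det * (univ.val.map y).esymm (l - k) := by
    rw [← det_of_pow_succAbove, ← det_transpose]
    rfl
  rw [of_add_pow_eq_mul, det_mul_eq_sum_det_submatrix_succAbove, prod_mul_distrib,
    ← det_vandermonde_eq_prod_filter_lt, ← det_vandermonde_eq_prod_filter_lt,
    ← Fin.sum_univ_eq_sum_range (fun k => (univ.val.map x).esymm k
      * (univ.val.map y).esymm (l - k) * ∏ r ∈ (range (l + 1)).erase k, (l.choose r : R)),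
    mul_sum]
  exact sum_congr rfl fun k _ => by rw [hminorA, hminorB]; ring

theorem det_add_pow_l (R : Type*) [CommRing R] (l : ℕ) (hl : 0 < l) (x y : Fin l → R) :
    (Matrix.of fun i j : Fin l => (x i + y j) ^ l).det =
      (-1 : R) ^ (l * (l - 1) / 2) *
        (∏ p ∈ Finset.univ.filter (fun p : Fin l × Fin l => p.1 < p.2),
          (x p.2 - x p.1) * (y p.2 - y p.1)) *
        ∑ k ∈ Finset.range (l + 1),
          (Multiset.map x Finset.univ.val).esymm k *
            (Multiset.map y Finset.univ.val).esymm (l - k) *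
            ∏ r ∈ (Finset.range (l + 1)).erase k, (Nat.choose l r : R) :=
  det_add_pow_l_general R l x y
end

section
/- Let n ≥ 2, let v = (a_0, …, a_{n-1}) ∈ ℂ^n, let C_n(v) = [a_{j-i mod n}]_{0≤i,j≤n-1} be the circulant matrix of v with eigenvalues λ_0, …, λ_{n-1}, and let W_n(v) = [a_{j-i mod n}]_{1≤i,j≤n-1} be the (n-1)×(n-1) almost circulant matrix. Then det W_n(v) = (1/n) Σ_{l=0}^{n-1} ∏_{k ∈ [0,n-1]∖{l}} λ_k. -/
/-! The Fourier matrix `F = (ζ ^ (i * r))`, a Vandermonde matrix in the powers of `ζ`, satisfies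
`C F = F diag(λ)`, and the trace of the adjugate is a similarity invariant, so
`tr (adj C) = tr (adj diag(λ)) = ∑_l ∏_{k ≠ l} λ_k`. On the other hand `C` is unchanged by a
simultaneous cyclic shift of rows and columns, hence so is `adj C`: its diagonal is constant, equal
to the `(0,0)` cofactor `det W`, and `tr (adj C) = n det W`.

Mathlib's `circulant v` has entries `v (i - j)`, so the `C_n(v)` of the statement is
`(circulant v)ᵀ`. -/

open Matrix Finset

namespace Matrix

section Adjugate

variable {n R : Type*} [Fintype n] [DecidableEq n] [CommRing R]

theorem trace_adjugate_conj {P : Matrix n n R} (hP : IsUnit P.det) (A : Matrix n n R) :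
    (P * A * P⁻¹).adjugate.trace = A.adjugate.trace := by
  rw [adjugate_mul_distrib, adjugate_mul_distrib, trace_mul_comm, Matrix.mul_assoc,
    ← adjugate_mul_distrib, nonsing_inv_mul _ hP, adjugate_one, Matrix.mul_one]

theorem trace_adjugate_diagonal (d : n → R) :
    (diagonal d).adjugate.trace = ∑ l, ∏ k ∈ univ.erase l, d k := by
  rw [adjugate_diagonal, trace_diagonal]

end Adjugate

section TranslationInvariant

variable {G R : Type*} [AddCommGroup G]

theorem transpose_circulant_translation_invariant (v : G → R) (c i j : G) :
    (circulant v)ᵀ (c + i) (c + j) = (circulant v)ᵀ i j := by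
  simp only [transpose_apply, circulant_apply, add_sub_add_left_eq_sub]

variable [Fintype G] [DecidableEq G] [CommRing R]

theorem adjugate_apply_self_eq_of_translation_invariant {A : Matrix G G R}
    (hA : ∀ c i j, A (c + i) (c + j) = A i j) (i : G) :
    A.adjugate i i = A.adjugate 0 0 := by
  have hsub : A.submatrix (Equiv.addLeft i) (Equiv.addLeft i) = A := ext (hA i)
  have := congrFun₂ (adjugate_submatrix_equiv_self (Equiv.addLeft i) A) 0 0
  rw [hsub] at this
  simpa using this.symm

theorem trace_adjugate_of_translation_invariant {A : Matrix G G R}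
    (hA : ∀ c i j, A (c + i) (c + j) = A i j) :
    A.adjugate.trace = Fintype.card G * A.adjugate 0 0 := by
  simp only [trace, diag, adjugate_apply_self_eq_of_translation_invariant hA, sum_const,
    card_univ, nsmul_eq_mul]

end TranslationInvariant

theorem transpose_circulant_mul_vandermonde {R : Type*} [CommRing R] {n : ℕ} [NeZero n]
    (v : Fin n → R) {ζ : R} (hζ : ζ ^ n = 1) :
    (circulant v)ᵀ * vandermonde (fun i : Fin n => ζ ^ (i : ℕ)) =
      vandermonde (fun i : Fin n => ζ ^ (i : ℕ)) *
        diagonal fun r : Fin n => ∑ k, v k * ζ ^ ((r : ℕ) * (k : ℕ)) := by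
  ext i r
  have hshift (k : Fin n) : (ζ ^ ((i + k : Fin n) : ℕ)) ^ (r : ℕ) =
      (ζ ^ (i : ℕ)) ^ (r : ℕ) * ζ ^ ((r : ℕ) * (k : ℕ)) := by
    rw [Fin.val_add, ← pow_eq_pow_mod _ hζ, pow_add, mul_pow, ← pow_mul ζ (k : ℕ),
      mul_comm (k : ℕ)]
  calc ((circulant v)ᵀ * vandermonde fun i : Fin n => ζ ^ (i : ℕ)) i r
      = ∑ k, v ((i + k) - i) * (ζ ^ ((i + k : Fin n) : ℕ)) ^ (r : ℕ) :=
        (Fintype.sum_equiv (Equiv.addLeft i) _ _ fun k => rfl).symm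
    _ = _ := by
        simp only [add_sub_cancel_left, hshift, mul_diagonal, vandermonde_apply, mul_sum]
        exact sum_congr rfl fun k _ => mul_left_comm _ _ _

theorem isUnit_det_vandermonde_pow {K : Type*} [Field K] {n : ℕ} {ζ : K}
    (hζ : IsPrimitiveRoot ζ n) :
    IsUnit (vandermonde fun i : Fin n => ζ ^ (i : ℕ)).det :=
  isUnit_iff_ne_zero.mpr <| det_vandermonde_ne_zero_iff.mpr fun i j h =>
    Fin.ext (hζ.pow_inj i.isLt j.isLt h)

end Matrix

theorem det_almost_circulant (n : ℕ) (hn : 2 ≤ n) (v : Fin n → ℂ)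
    (ζ : ℂ) (hζ : IsPrimitiveRoot ζ n) (lam : Fin n → ℂ)
    (hlam : ∀ r : Fin n, lam r = ∑ k : Fin n, v k * ζ ^ ((r : ℕ) * (k : ℕ))) :
    (Matrix.of fun i j : Fin (n - 1) =>
        v ⟨((j : ℕ) + n - (i : ℕ)) % n, Nat.mod_lt _ (by omega)⟩).det =
      (1 / (n : ℂ)) * ∑ l : Fin n, ∏ k ∈ Finset.univ.erase l, lam k := by
  obtain ⟨m, rfl⟩ : ∃ m, n = m + 1 := ⟨n - 1, by omega⟩
  set F := vandermonde fun i : Fin (m + 1) => ζ ^ (i : ℕ)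
  have hF := isUnit_det_vandermonde_pow hζ
  have hdiag : (circulant v)ᵀ = F * diagonal lam * F⁻¹ := by
    rw [funext hlam, ← transpose_circulant_mul_vandermonde v hζ.pow_eq_one,
      mul_nonsing_inv_cancel_right _ _ hF]
  have hW : (Matrix.of fun i j : Fin (m + 1 - 1) =>
      v ⟨((j : ℕ) + (m + 1) - (i : ℕ)) % (m + 1), Nat.mod_lt _ (by omega)⟩) =
      (circulant v)ᵀ.submatrix Fin.succ Fin.succ := by
    ext i j
    simp only [submatrix_apply, transpose_apply, circulant_apply, of_apply]
    congr 1
    ext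
    simp only [Fin.sub_def, Fin.val_succ]
    congr 1
    omega
  have htrace := trace_adjugate_of_translation_invariant
    (transpose_circulant_translation_invariant v)
  rw [hdiag, trace_adjugate_conj hF, trace_adjugate_diagonal, ← hdiag, Fintype.card_fin] at htrace
  have hminor :
      (circulant v)ᵀ.adjugate 0 0 = ((circulant v)ᵀ.submatrix Fin.succ Fin.succ).det := by
    simp [adjugate_fin_succ_eq_det_submatrix]
  rw [hW, ← hminor, htrace, ← mul_assoc, one_div_mul_cancel (by norm_cast), one_mul]
end

section
/- Let q = p^f = 2n+1 ≥ 7 be an odd prime power with f ≥ 2, and let s_1 = 1, s_2, …, s_n be the nonzero squares of F_q. Then the (n-1)×(n-1) matrix B_q(n-1) = [(s_i + s_j)^{n-1}]_{2≤i,j≤n} over F_q is singular. -/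
open Finset in
theorem B_q_n_sub_one_singular (p f n : ℕ) (hp : p.Prime) (hodd : p ≠ 2) (hf : 2 ≤ f)
    (F : Type*) [Field F] [Fintype F] (hcard : Fintype.card F = p ^ f)
    (hn : Fintype.card F = 2 * n + 1) (h7 : 7 ≤ Fintype.card F)
    (s : Fin (n - 1) → F) (hinj : Function.Injective s)
    (hrange : ∀ x : F, (∃ i, s i = x) ↔ (IsSquare x ∧ x ≠ 0 ∧ x ≠ 1)) :
    (Matrix.of fun i j : Fin (n - 1) => (s i + s j) ^ (n - 1)).det = 0 := by
  classical
  haveI : Fact p.Prime := ⟨hp⟩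
  have hp3 : 3 ≤ p := by
    rcases hp.two_le.lt_or_eq with h | h
    · omega
    · omega
  have hn3 : 3 ≤ n := by omega
  -- characteristic of F is p
  have hq : p ^ f = 2 * n + 1 := by rw [← hcard, hn]
  have hcharF : CharP F p := by
    have h1 : CharP F (ringChar F) := ringChar.charP F
    have hprime : (ringChar F).Prime := CharP.char_is_prime F (ringChar F)
    have hdvd : ringChar F ∣ p ^ f := by
      rw [← hcard]
      exact (CharP.cast_eq_zero_iff F (ringChar F) _).mp (FiniteField.cast_card_eq_zero F)
    have : ringChar F = p := by
      have := hprime.dvd_of_dvd_pow hdvd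
      exact (Nat.prime_dvd_prime_iff_eq hprime hp).mp this
    rwa [this] at h1
  -- arithmetic setup: p = 2c+3, p^(f-1) = 2m+1, n-1 = c + p*m
  obtain ⟨c, hc⟩ : ∃ c, p = 2 * c + 3 := by
    obtain ⟨c', hc'⟩ := hp.odd_of_ne_two hodd
    exact ⟨c' - 1, by omega⟩
  obtain ⟨m, hm⟩ : ∃ m, p ^ (f - 1) = 2 * m + 1 := by
    have := (hp.odd_of_ne_two hodd).pow (n := f - 1)
    obtain ⟨m, hm⟩ := this
    exact ⟨m, by omega⟩
  have hm1 : 1 ≤ m := by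
    have : p ≤ p ^ (f - 1) := by
      calc p = p ^ 1 := (pow_one p).symm
      _ ≤ p ^ (f - 1) := Nat.pow_le_pow_right (by omega) (by omega)
    omega
  have hpf : p ^ f = p * p ^ (f - 1) := by
    rw [← pow_succ']
    congr 1
    omega
  obtain ⟨D, hD⟩ : ∃ D, p * m = D := ⟨_, rfl⟩
  have hD3 : 3 ≤ D := by
    rw [← hD]
    calc 3 = 3 * 1 := by ring
    _ ≤ p * m := Nat.mul_le_mul hp3 hm1
  have hkey : n - 1 = c + p * m := by
    have h1 : 2 * n + 1 = (2 * c + 3) * (2 * m + 1) := by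
      rw [← hq, hpf, hm, hc]
    have h5 : n = c + p * m + 1 := by rw [hc]; nlinarith [h1]
    omega
  rw [hD] at hkey
  -- Lucas: p ∣ choose (n-1) (c+1) and p ∣ choose (n-1) (c+2)
  have hlucas : ∀ a : ℕ, c < a → a < p → ((n - 1).choose a : F) = 0 := by
    intro a hca hap
    rw [CharP.cast_eq_zero_iff F p]
    have h1 : (n - 1) % p = c := by
      rw [hkey, ← hD, Nat.add_mul_mod_self_left, Nat.mod_eq_of_lt (by omega)]
    have h2 := Choose.choose_modEq_choose_mod_mul_choose_div_nat (n := n - 1) (k := a) (p := p)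
    rw [h1, Nat.mod_eq_of_lt hap, Nat.choose_eq_zero_of_lt hca, zero_mul] at h2
    exact (Nat.modEq_zero_iff_dvd).mp h2
  -- the two special indices in Fin n
  have hlt1 : c + 1 < n := by omega
  have hlt2 : c + 2 < n := by omega
  set P : Fin n → Prop := fun k => ((n - 1).choose (k : ℕ) : F) ≠ 0 with hP
  let k₁ : Fin n := ⟨c + 1, hlt1⟩
  let k₂ : Fin n := ⟨c + 2, hlt2⟩
  have hk₁ : ¬ P k₁ := by simpa [hP, k₁] using hlucas (c + 1) (by omega) (by omega)
  have hk₂ : ¬ P k₂ := by simpa [hP, k₂] using hlucas (c + 2) (by omega) (by omega)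
  -- cardinality bound on the subtype
  have hcardT : Fintype.card {k : Fin n // P k} ≤ n - 2 := by
    rw [Fintype.card_subtype]
    have hsub : univ.filter P ⊆ univ \ {k₁, k₂} := by
      intro k hk
      simp only [mem_filter, mem_univ, true_and] at hk
      simp only [mem_sdiff, mem_univ, true_and, mem_insert, mem_singleton]
      rintro (rfl | rfl)
      · exact hk₁ hk
      · exact hk₂ hk
    have h12 : k₁ ≠ k₂ := by
      simp only [k₁, k₂, Ne, Fin.mk.injEq]
      omega
    calc (univ.filter P).card ≤ (univ \ {k₁, k₂}).card := Finset.card_le_card hsub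
      _ = n - 2 := by
        rw [Finset.card_sdiff_of_subset (Finset.subset_univ _), Finset.card_univ, Fintype.card_fin,
          Finset.card_insert_of_notMem (by simpa using h12), Finset.card_singleton]
  -- factor the matrix
  let M : Matrix (Fin (n - 1)) {k : Fin n // P k} F :=
    fun i k => ((n - 1).choose (k : ℕ) : F) * s i ^ (k : ℕ)
  let N : Matrix {k : Fin n // P k} (Fin (n - 1)) F :=
    fun k j => s j ^ (n - 1 - (k : ℕ))
  have hfac : (Matrix.of fun i j : Fin (n - 1) => (s i + s j) ^ (n - 1)) = M * N := by
    ext i j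
    rw [Matrix.mul_apply]
    simp only [Matrix.of_apply, M, N]
    have hexp : (s i + s j) ^ (n - 1)
        = ∑ k ∈ range n, s i ^ k * s j ^ (n - 1 - k) * ((n - 1).choose k : F) := by
      have hr : n - 1 + 1 = n := by omega
      rw [add_pow (s i) (s j) (n - 1), hr]
    rw [hexp, ← Fin.sum_univ_eq_sum_range (fun k => s i ^ k * s j ^ (n - 1 - k)
      * ((n - 1).choose k : F)) n]
    rw [← Finset.sum_filter_of_ne (p := P) (by
      intro k _ hne
      simp only [hP]
      intro h0
      apply hne
      rw [h0, mul_zero])]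
    rw [Finset.sum_subtype (p := P) (univ.filter P) (fun x => by simp)
      (fun k : Fin n => s i ^ (k : ℕ) * s j ^ (n - 1 - (k : ℕ)) * ((n - 1).choose (k : ℕ) : F))]
    apply Finset.sum_congr rfl
    intro k _
    ring
  rw [hfac]
  by_contra hdet
  have hunit : IsUnit (M * N) :=
    (Matrix.isUnit_iff_isUnit_det _).mpr (isUnit_iff_ne_zero.mpr hdet)
  have hrank : (M * N).rank = n - 1 := by
    rw [Matrix.rank_of_isUnit _ hunit, Fintype.card_fin]
  have hle : (M * N).rank ≤ n - 2 :=
    le_trans (Matrix.rank_mul_le_right M N) (le_trans (Matrix.rank_le_card_height N) hcardT)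
  omega
end

section
/- Let p = 2n+1 ≥ 7 be a prime with p ≡ 1 (mod 4). Then the Legendre symbol of det B_p(n-2) modulo p equals (6/p). -/
open scoped Nat

-- Auxiliary lemma: half-factorial Wilson for p ≡ 1 mod 4
lemma half_factorial_sq (p n : ℕ) [hp : Fact p.Prime] (hpn : p = 2 * n + 1)
    (h1 : p % 4 = 1) : ((n ! : ℕ) : ZMod p) ^ 2 = -1 := by
  have hw := ZMod.wilsons_lemma p
  have hsplit : ((p - 1)! : ℕ) = n ! * ∏ j ∈ Finset.Ico (n + 1) (2 * n + 1), j := by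
    rw [show p - 1 = 2 * n from by omega, ← Finset.prod_Ico_id_eq_factorial (2 * n),
      ← Finset.prod_Ico_id_eq_factorial n,
      ← Finset.prod_Ico_consecutive _ (by omega : 1 ≤ n + 1) (by omega : n + 1 ≤ 2 * n + 1)]
  have h0 : ((2 * n + 1 : ℕ) : ZMod p) = 0 := by rw [← hpn]; exact ZMod.natCast_self p
  have hre : (∏ j ∈ Finset.Ico (n + 1) (2 * n + 1), (j : ZMod p))
      = ∏ j ∈ Finset.Ico 1 (n + 1), (-(j : ZMod p)) := by
    refine Finset.prod_nbij' (fun j => 2 * n + 1 - j) (fun j => 2 * n + 1 - j) ?_ ?_ ?_ ?_ ?_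
    · intro a ha; simp only [Finset.mem_Ico] at *; omega
    · intro a ha; simp only [Finset.mem_Ico] at *; omega
    · intro a ha; simp only [Finset.mem_Ico] at ha; omega
    · intro a ha; simp only [Finset.mem_Ico] at ha; omega
    · intro a ha
      simp only [Finset.mem_Ico] at ha
      have : ((2 * n + 1 - a : ℕ) : ZMod p) + (a : ZMod p) = 0 := by
        rw [← Nat.cast_add, show 2 * n + 1 - a + a = 2 * n + 1 from by omega, h0]
      have := eq_neg_of_add_eq_zero_left this
      rw [this, neg_neg]
  have hneg : (∏ j ∈ Finset.Ico 1 (n + 1), (-(j : ZMod p)))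
      = (-1) ^ n * ((n ! : ℕ) : ZMod p) := by
    have : ∀ j : ℕ, (-(j : ZMod p)) = (-1) * (j : ZMod p) := fun j => by ring
    simp only [this, Finset.prod_mul_distrib, Finset.prod_const, Nat.card_Ico]
    rw [← Nat.cast_prod, Finset.prod_Ico_id_eq_factorial]
    norm_num
  have heven : (-1 : ZMod p) ^ n = 1 := Even.neg_one_pow ⟨n / 2, by omega⟩
  have key : (((p - 1)! : ℕ) : ZMod p)
      = ((n ! : ℕ) : ZMod p) * (((-1) ^ n) * ((n ! : ℕ) : ZMod p)) := by
    rw [hsplit, Nat.cast_mul, Nat.cast_prod, hre, hneg]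
  rw [hw, heven, one_mul] at key
  rw [sq, ← key]


theorem legendre_det_B_p_n_sub_two_one_mod_four (p n : ℕ) [hp : Fact p.Prime]
    (hpn : p = 2 * n + 1) (h7 : 7 ≤ p) (h1 : p % 4 = 1)
    (s : Fin (n - 1) → ZMod p) (hinj : Function.Injective s)
    (hrange : ∀ x : ZMod p, (∃ i, s i = x) ↔ (IsSquare x ∧ x ≠ 0 ∧ x ≠ 1)) :
    legendreSym p (((Matrix.of fun i j : Fin (n - 1) => (s i + s j) ^ (n - 2)).det.val : ℤ))
      = legendreSym p 6 := by
  classical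
  have hp2 : p ≠ 2 := by omega
  have hn3 : 3 ≤ n := by omega
  haveI : Fact (2 < p) := ⟨by omega⟩
  set χ := quadraticChar (ZMod p) with hχdef
  have hcast : ∀ x : ZMod p, ((x.val : ℤ) : ZMod p) = x := by
    intro x; push_cast; simp [ZMod.natCast_val, ZMod.cast_id]
  have hleg : ∀ x : ZMod p, legendreSym p (x.val : ℤ) = χ x := by
    intro x; rw [legendreSym, hcast]
  have hleg6 : legendreSym p (6 : ℤ) = χ 6 := by
    rw [legendreSym, hχdef, quadraticChar_apply, quadraticChar_apply]; norm_num
  rw [hleg, hleg6]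
  set V := Matrix.vandermonde s with hV
  have hVne : V.det ≠ 0 := Matrix.det_vandermonde_ne_zero_iff.mpr hinj
  set c : Fin (n - 1) → ZMod p := fun k => ((n - 2).choose (k : ℕ) : ZMod p) with hc
  have hfac : (Matrix.of fun i j : Fin (n - 1) => (s i + s j) ^ (n - 2))
      = V * (Matrix.diagonal c * (V.transpose.submatrix Fin.revPerm id)) := by
    ext i j
    rw [Matrix.mul_apply]
    simp only [Matrix.diagonal_mul, Matrix.of_apply, Matrix.submatrix_apply,
      Matrix.transpose_apply, Matrix.vandermonde_apply, id, hV, hc]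
    rw [add_pow, show n - 2 + 1 = n - 1 from by omega,
      ← Fin.sum_univ_eq_sum_range (fun t => s i ^ t * s j ^ (n - 2 - t) * ((n - 2).choose t : ZMod p)) (n - 1)]
    refine Finset.sum_congr rfl fun k _ => ?_
    rw [show ((Fin.revPerm k : Fin (n - 1)) : ℕ) = n - 2 - (k : ℕ) from by
      simp [Fin.revPerm, Fin.val_rev]; omega]
    ring
  have hrevval : ∀ k : Fin (n - 1), ((Fin.revPerm k : Fin (n - 1)) : ℕ) = n - 2 - (k : ℕ) := by
    intro k; simp [Fin.revPerm, Fin.val_rev]; omega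
  have hfactne : ∀ k : ℕ, k ≤ n → ((k ! : ℕ) : ZMod p) ≠ 0 := by
    intro k hk h
    rw [ZMod.natCast_eq_zero_iff, Nat.Prime.dvd_factorial hp.out] at h
    omega
  have h2ne : (2 : ZMod p) ≠ 0 := by
    rw [show (2 : ZMod p) = ((2 : ℕ) : ZMod p) by norm_cast, Ne,
      ZMod.natCast_eq_zero_iff]
    intro h; have := Nat.le_of_dvd (by norm_num) h; omega
  have h3ne : (3 : ZMod p) ≠ 0 := by
    rw [show (3 : ZMod p) = ((3 : ℕ) : ZMod p) by norm_cast, Ne,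
      ZMod.natCast_eq_zero_iff]
    intro h; have := Nat.le_of_dvd (by norm_num) h; omega
  -- reduce to the product of binomial coefficients
  rw [hfac, Matrix.det_mul, Matrix.det_mul, Matrix.det_diagonal, Matrix.det_permute,
    Matrix.det_transpose]
  rw [map_mul, map_mul, map_mul]
  have hχV : χ V.det * χ V.det = 1 := by
    rw [← sq]; exact quadraticChar_sq_one hVne
  have hχsign : χ ((Equiv.Perm.sign (Fin.revPerm : Equiv.Perm (Fin (n - 1)))) : ZMod p) = 1 := by
    rcases Int.units_eq_one_or (Equiv.Perm.sign (Fin.revPerm : Equiv.Perm (Fin (n - 1)))) with h | h <;>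
      rw [h]
    · simp
    · have hsq : IsSquare (-1 : ZMod p) := by
        rw [ZMod.exists_sq_eq_neg_one_iff]; omega
      have : ((-1 : ℤˣ) : ZMod p) = (-1 : ZMod p) := by simp
      rw [this, quadraticChar_one_iff_isSquare (by simp : (-1 : ZMod p) ≠ 0)]
      exact hsq
  rw [show χ V.det * (χ (∏ k, c k) * (χ ((Equiv.Perm.sign (Fin.revPerm : Equiv.Perm (Fin (n - 1)))) : ZMod p) * χ V.det))
      = (χ V.det * χ V.det) * (χ ((Equiv.Perm.sign (Fin.revPerm : Equiv.Perm (Fin (n - 1)))) : ZMod p) * χ (∏ k, c k)) from by ring,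
    hχV, hχsign, one_mul, one_mul]
  -- Step 5 : χ (∏ choose) = χ ((n-2)!)
  have hCkk : ∀ k : Fin (n - 1),
      χ (c k) * (χ (((k : ℕ)! : ℕ) : ZMod p) * χ ((((n - 2 - (k : ℕ))! : ℕ)) : ZMod p))
        = χ ((((n - 2)! : ℕ)) : ZMod p) := by
    intro k
    rw [← map_mul, ← map_mul, hc]
    congr 1
    rw [← Nat.cast_mul, ← Nat.cast_mul]
    congr 1
    have hk : (k : ℕ) ≤ n - 2 := by have := k.isLt; omega
    rw [← mul_assoc, Nat.choose_mul_factorial_mul_factorial hk]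
  have hrev : (∏ k : Fin (n - 1), χ ((((n - 2 - (k : ℕ))! : ℕ)) : ZMod p))
      = ∏ k : Fin (n - 1), χ (((k : ℕ)! : ℕ) : ZMod p) := by
    rw [← Equiv.prod_comp (Fin.revPerm : Equiv.Perm (Fin (n - 1)))
      (fun t : Fin (n - 1) => χ (((t : ℕ)! : ℕ) : ZMod p))]
    exact Finset.prod_congr rfl fun k _ => by rw [hrevval k]
  have hprod : (∏ k : Fin (n - 1),
      (χ (c k) * (χ (((k : ℕ)! : ℕ) : ZMod p) * χ ((((n - 2 - (k : ℕ))! : ℕ)) : ZMod p))))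
        = χ ((((n - 2)! : ℕ)) : ZMod p) ^ (n - 1) := by
    rw [Finset.prod_congr rfl fun k _ => hCkk k, Finset.prod_const]
    simp
  rw [Finset.prod_mul_distrib, Finset.prod_mul_distrib, hrev] at hprod
  have hB : (∏ k : Fin (n - 1), χ (((k : ℕ)! : ℕ) : ZMod p))
      * (∏ k : Fin (n - 1), χ (((k : ℕ)! : ℕ) : ZMod p)) = 1 := by
    rw [← Finset.prod_mul_distrib]
    refine Finset.prod_eq_one fun k _ => ?_
    rw [← sq]
    exact quadraticChar_sq_one (hfactne (k : ℕ) (by have := k.isLt; omega))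
  rw [hB, mul_one] at hprod
  have hmfacne : ((((n - 2)! : ℕ)) : ZMod p) ≠ 0 := hfactne (n - 2) (by omega)
  have hpowodd : χ ((((n - 2)! : ℕ)) : ZMod p) ^ (n - 1) = χ ((((n - 2)! : ℕ)) : ZMod p) := by
    rw [show n - 1 = 2 * ((n - 2) / 2) + 1 from by omega, pow_succ, pow_mul,
      quadraticChar_sq_one hmfacne, one_pow, one_mul]
  rw [map_prod, hprod, hpowodd]
  -- Step 6 : χ ((n-2)!) = χ 6
  have hwil := half_factorial_sq p n hpn h1
  have hLpow : ∀ x : ZMod p, ((χ x : ℤ) : ZMod p) = x ^ n := by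
    intro x; rw [← hleg x, legendreSym.eq_pow, show p / 2 = n from by omega, hcast]
  have hpm : ∀ a b : ℤ, (a = 1 ∨ a = -1) → (b = 1 ∨ b = -1) →
      ((a : ZMod p) = (b : ZMod p)) → a = b := by
    intro a b ha hb h
    rcases ha with rfl | rfl <;> rcases hb with rfl | rfl
    · rfl
    · exfalso; push_cast at h; exact ZMod.neg_one_ne_one h.symm
    · exfalso; push_cast at h; exact ZMod.neg_one_ne_one h
    · rfl
  have hnfne : ((n ! : ℕ) : ZMod p) ≠ 0 := hfactne n le_rfl
  have hχ2 : χ (2 : ZMod p) = ZMod.χ₈ p := by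
    rw [← legendreSym.at_two hp2, ← hleg (2 : ZMod p)]
    congr 1
    have h2v : (2 : ZMod p).val = 2 := by
      rw [show (2 : ZMod p) = ((2 : ℕ) : ZMod p) by norm_cast, ZMod.val_natCast_of_lt (by omega)]
    rw [h2v]
    norm_num
  have hχnfac : χ ((n ! : ℕ) : ZMod p) = χ (2 : ZMod p) := by
    have hc1 := hLpow ((n ! : ℕ) : ZMod p)
    rw [show ((n ! : ℕ) : ZMod p) ^ n = (((n ! : ℕ) : ZMod p) ^ 2) ^ (n / 2) from by
        rw [← pow_mul]; congr 1; omega, hwil] at hc1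
    have hd1 := quadraticChar_dichotomy hnfne
    have hd2 := quadraticChar_dichotomy h2ne
    rcases (show p % 8 = 1 ∨ p % 8 = 5 from by omega) with h8 | h8
    · have hv1 : χ ((n ! : ℕ) : ZMod p) = 1 := by
        refine hpm _ 1 hd1 (Or.inl rfl) ?_
        rw [hc1]
        have : Even (n / 2) := ⟨n / 4, by omega⟩
        simp [this.neg_one_pow]
      have hv2 : χ (2 : ZMod p) = 1 := by
        rw [hχ2, ZMod.χ₈_nat_eq_if_mod_eight]
        have hodd : p % 2 = 1 := by omega
        simp [hodd, h8]
      rw [hv1, hv2]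
    · have hv1 : χ ((n ! : ℕ) : ZMod p) = -1 := by
        refine hpm _ (-1) hd1 (Or.inr rfl) ?_
        rw [hc1]
        have : Odd (n / 2) := ⟨n / 4, by omega⟩
        simp [this.neg_one_pow]
      have hv2 : χ (2 : ZMod p) = -1 := by
        rw [hχ2, ZMod.χ₈_nat_eq_if_mod_eight]
        have hodd : p % 2 = 1 := by omega
        have : ¬(p % 8 = 1 ∨ p % 8 = 7) := by omega
        simp [hodd, this]
      rw [hv1, hv2]
  have e1 : ((n ! : ℕ) : ZMod p)
      = ((((n - 2) + 2 : ℕ)) : ZMod p) * ((((n - 2) + 1 : ℕ)) : ZMod p)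
        * ((((n - 2)! : ℕ)) : ZMod p) := by
    rw [← Nat.cast_mul, ← Nat.cast_mul]
    congr 1
    conv_lhs => rw [show n = (n - 2) + 2 from by omega]
    simp [Nat.factorial_succ]
    ring
  have hsq2 : χ (2 : ZMod p) * χ (2 : ZMod p) = 1 := by
    rw [← sq]; exact quadraticChar_sq_one h2ne
  have hsq3 : χ (3 : ZMod p) * χ (3 : ZMod p) = 1 := by
    rw [← sq]; exact quadraticChar_sq_one h3ne
  have e2 : χ (((((n - 2) + 2 : ℕ)) : ZMod p)) * χ (((((n - 2) + 1 : ℕ)) : ZMod p))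
      = χ (3 : ZMod p) := by
    have h4 : (((((n - 2) + 2 : ℕ)) : ZMod p) * ((((n - 2) + 1 : ℕ)) : ZMod p)) * (2 * 2)
        = (3 : ZMod p) := by
      have h0 : ((2 * n + 1 : ℕ) : ZMod p) = 0 := by rw [← hpn]; exact ZMod.natCast_self p
      have hn2 : (((n - 2 : ℕ)) : ZMod p) = (n : ZMod p) - 2 := by
        rw [Nat.cast_sub (by omega)]; norm_num
      push_cast [hn2] at h0 ⊢
      linear_combination (2 * (n : ZMod p) - 3) * h0
    calc χ (((((n - 2) + 2 : ℕ)) : ZMod p)) * χ (((((n - 2) + 1 : ℕ)) : ZMod p))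
        = χ ((((((n - 2) + 2 : ℕ)) : ZMod p) * ((((n - 2) + 1 : ℕ)) : ZMod p)) * (2 * 2)) * 1 := by
          rw [map_mul, map_mul, map_mul, hsq2]; ring
      _ = χ (3 : ZMod p) := by rw [h4, mul_one]
  have e3 : χ ((((n - 2)! : ℕ)) : ZMod p) = χ (3 : ZMod p) * χ ((n ! : ℕ) : ZMod p) := by
    have := congrArg χ e1
    rw [map_mul, map_mul] at this
    rw [this, show χ (((n - 2 + 2 : ℕ)) : ZMod p) * χ (((n - 2 + 1 : ℕ)) : ZMod p)
        * χ (((n - 2)! : ℕ) : ZMod p)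
      = (χ (((n - 2 + 2 : ℕ)) : ZMod p) * χ (((n - 2 + 1 : ℕ)) : ZMod p))
        * χ (((n - 2)! : ℕ) : ZMod p) from by ring, e2, ← mul_assoc, hsq3, one_mul]
  rw [e3, hχnfac, ← map_mul]
  norm_num
end

section
/- Let p = 2n+1 ≥ 7 be a prime with p ≡ 3 (mod 4). Then the Legendre symbol of det B_p(n-2) modulo p equals (-2/p). -/
open Finset

private lemma prod_choose_sq (t : ℕ) :
    ∏ m ∈ range (2 * t + 2), (2 * t + 1).choose m
      = (∏ m ∈ range (t + 1), (2 * t + 1).choose m) ^ 2 := by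
  have h : 2 * t + 2 = (t + 1) + (t + 1) := by ring
  rw [h, Finset.prod_range_add, sq]
  congr 1
  have h2 : ∀ i ∈ range (t + 1),
      (2 * t + 1).choose ((t + 1) + i) = (2 * t + 1).choose (t - i) := by
    intro i hi
    have hi' : i ≤ t := by simpa [Nat.lt_succ_iff] using hi
    rw [← Nat.choose_symm (by omega : (t + 1) + i ≤ 2 * t + 1)]
    congr 1
    omega
  rw [Finset.prod_congr rfl h2]
  simpa using Finset.prod_range_reflect (fun j => (2 * t + 1).choose j) (t + 1)

private lemma even_T (m : ℕ) : Even (∑ j ∈ range (4 * m), j) := by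
  have h := Finset.sum_range_id_mul_two (4 * m)
  cases m with
  | zero => simp
  | succ m =>
    have hsub : 4 * (m + 1) - 1 = 4 * m + 3 := by omega
    rw [hsub] at h
    have h2 : (∑ j ∈ range (4 * (m + 1)), j) * 2 = (2 * ((m + 1) * (4 * m + 3))) * 2 := by
      rw [h]; ring
    have h3 := Nat.eq_of_mul_eq_mul_right (by norm_num) h2
    exact ⟨(m + 1) * (4 * m + 3), by omega⟩

private lemma odd_T (m : ℕ) : Odd (∑ j ∈ range (4 * m + 2), j) := by
  have h := Finset.sum_range_id_mul_two (4 * m + 2)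
  have hsub : 4 * m + 2 - 1 = 4 * m + 1 := by omega
  rw [hsub] at h
  have h2 : (∑ j ∈ range (4 * m + 2), j) * 2 = ((2 * m + 1) * (4 * m + 1)) * 2 := by
    rw [h]; ring
  have h3 := Nat.eq_of_mul_eq_mul_right (by norm_num) h2
  rw [h3]
  exact ⟨4 * m ^ 2 + 3 * m, by ring⟩

theorem legendre_det_B_p_n_sub_two_three_mod_four (p n : ℕ) [hp : Fact p.Prime]
    (hpn : p = 2 * n + 1) (h7 : 7 ≤ p) (h3 : p % 4 = 3)
    (s : Fin (n - 1) → ZMod p) (hinj : Function.Injective s)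
    (hrange : ∀ x : ZMod p, (∃ i, s i = x) ↔ (IsSquare x ∧ x ≠ 0 ∧ x ≠ 1)) :
    legendreSym p (((Matrix.of fun i j : Fin (n - 1) => (s i + s j) ^ (n - 2)).det.val : ℤ))
      = legendreSym p (-2) := by
  classical
  have hp2 : p ≠ 2 := by omega
  have hn3 : 3 ≤ n := by omega
  have hnodd : n % 2 = 1 := by omega
  set k := n - 2 with hk
  have hk1 : n - 1 = k + 1 := by omega
  set B : Matrix (Fin (n - 1)) (Fin (n - 1)) (ZMod p) :=
    Matrix.of fun i j : Fin (n - 1) => (s i + s j) ^ (n - 2) with hBdef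
  have hs0 : ∀ j, s j ≠ 0 := fun j => ((hrange (s j)).mp ⟨j, rfl⟩).2.1
  have hsq : ∀ j, ∃ r : ZMod p, r ≠ 0 ∧ s j = r * r := by
    intro j
    obtain ⟨hsq, h0, -⟩ := (hrange (s j)).mp ⟨j, rfl⟩
    obtain ⟨r, hr⟩ := hsq
    exact ⟨r, fun h => h0 (by simp [hr, h]), hr⟩
  choose t ht0 hts using hsq
  set u : Fin (n - 1) → ZMod p := fun j => (s j)⁻¹ with hu
  set V := Matrix.vandermonde s with hV
  set U := Matrix.vandermonde u with hU
  set C : ZMod p := ∏ m : Fin (n - 1), ((k.choose (m : ℕ) : ℕ) : ZMod p) with hC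
  set S : ZMod p := ∏ j : Fin (n - 1), s j ^ k with hS
  -- the key factorization
  have hdet : B.det = V.det * C * (U.det * S) := by
    set M : Matrix (Fin (n - 1)) (Fin (n - 1)) (ZMod p) :=
      Matrix.of fun i m => s i ^ (m : ℕ) * ((k.choose (m : ℕ) : ℕ) : ZMod p) with hM
    set W : Matrix (Fin (n - 1)) (Fin (n - 1)) (ZMod p) :=
      Matrix.of fun m j => s j ^ (k - (m : ℕ)) with hW
    have hBMW : B = M * W := by
      ext i j
      rw [hBdef, Matrix.mul_apply]
      simp only [Matrix.of_apply, hM, hW]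
      have h1 : ∑ m : Fin (n - 1),
          s i ^ (m : ℕ) * ((k.choose (m : ℕ) : ℕ) : ZMod p) * s j ^ (k - (m : ℕ))
          = ∑ m ∈ range (n - 1),
            s i ^ m * ((k.choose m : ℕ) : ZMod p) * s j ^ (k - m) :=
        Fin.sum_univ_eq_sum_range
          (fun m => s i ^ m * ((k.choose m : ℕ) : ZMod p) * s j ^ (k - m)) (n - 1)
      rw [h1, hk1, show n - 2 = k from rfl, add_pow]
      exact (Finset.sum_congr rfl fun m _ => by ring).symm
    have hMeq : M = V * Matrix.diagonal (fun m : Fin (n - 1) => ((k.choose (m : ℕ) : ℕ) : ZMod p)) := by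
      ext i m
      simp [hM, hV, Matrix.mul_diagonal, Matrix.vandermonde]
    have hWeq : W = U.transpose * Matrix.diagonal (fun j : Fin (n - 1) => s j ^ k) := by
      ext m j
      simp only [hW, hU, Matrix.of_apply, Matrix.mul_diagonal, Matrix.transpose_apply,
        Matrix.vandermonde_apply, hu]
      have hm : (m : ℕ) ≤ k := by have := m.isLt; omega
      have hpow : s j ^ k = s j ^ (k - (m : ℕ)) * s j ^ (m : ℕ) := by
        rw [← pow_add]; congr 1; omega
      rw [inv_pow, hpow]
      field_simp [pow_ne_zero _ (hs0 j)]
    rw [hBMW, Matrix.det_mul, hMeq, hWeq, Matrix.det_mul, Matrix.det_mul,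
      Matrix.det_diagonal, Matrix.det_diagonal, Matrix.det_transpose]
  -- character computations
  set χ := quadraticChar (ZMod p) with hχ
  have hring2 : ringChar (ZMod p) ≠ 2 := by rw [ZMod.ringChar_zmod_n]; exact hp2
  have hχC : χ C = 1 := by
    obtain ⟨tt, htt⟩ : ∃ tt, k = 2 * tt + 1 := ⟨(n - 3) / 2, by omega⟩
    have hCnat : C = ((∏ m ∈ range (k + 1), k.choose m : ℕ) : ZMod p) := by
      rw [hC, ← hk1, Nat.cast_prod]
      exact Fin.prod_univ_eq_prod_range (fun m => ((k.choose m : ℕ) : ZMod p)) (n - 1)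
    set c : ℕ := ∏ m ∈ range (tt + 1), k.choose m with hc
    have hprod : (∏ m ∈ range (k + 1), k.choose m) = c ^ 2 := by
      rw [hc, htt]
      exact prod_choose_sq tt
    have hcne : ((c : ℕ) : ZMod p) ≠ 0 := by
      rw [Ne, ZMod.natCast_eq_zero_iff]
      intro hdvd
      rw [hc, Prime.dvd_finset_prod_iff hp.out.prime] at hdvd
      obtain ⟨m, hm, hpm⟩ := hdvd
      have hmk : m ≤ k := by
        have := Finset.mem_range.mp hm; omega
      have hfac : p ∣ k.factorial := by
        refine hpm.trans ⟨Nat.factorial m * Nat.factorial (k - m), ?_⟩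
        rw [← mul_assoc, Nat.choose_mul_factorial_mul_factorial hmk]
      have := (Nat.Prime.dvd_factorial hp.out).mp hfac
      omega
    rw [hCnat, hprod]
    push_cast
    exact quadraticChar_sq_one' hcne
  have hχS : χ S = 1 := by
    have hSsq : S = (∏ j : Fin (n - 1), t j ^ k) ^ 2 := by
      rw [hS, ← Finset.prod_pow]
      refine Finset.prod_congr rfl fun j _ => ?_
      rw [hts j]; ring
    have hne : (∏ j : Fin (n - 1), t j ^ k) ≠ 0 :=
      Finset.prod_ne_zero_iff.mpr fun j _ => pow_ne_zero _ (ht0 j)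
    rw [hSsq]
    exact quadraticChar_sq_one' hne
  have hχm1 : χ (-1) = -1 := by
    rw [hχ, quadraticChar_neg_one hring2, ZMod.card, ZMod.χ₄_nat_eq_if_mod_four]
    simp [show p % 2 = 1 by omega, h3]
  have hχVU : χ (V.det * U.det) = (-1) ^ (∑ j ∈ range (n - 1), j) := by
    rw [hV, hU, Matrix.det_vandermonde, Matrix.det_vandermonde, ← Finset.prod_mul_distrib]
    have h2 : (∏ i : Fin (n - 1),
          ((∏ j ∈ Ioi i, (s j - s i)) * ∏ j ∈ Ioi i, (u j - u i)))
        = ∏ i : Fin (n - 1), ∏ j ∈ Ioi i, ((s j - s i) * (u j - u i)) :=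
      Finset.prod_congr rfl fun i _ => Finset.prod_mul_distrib.symm
    rw [h2, map_prod]
    have h3 : ∀ i : Fin (n - 1),
        (χ (∏ j ∈ Ioi i, ((s j - s i) * (u j - u i)))) = ∏ j ∈ Ioi i, χ ((s j - s i) * (u j - u i)) :=
      fun i => map_prod χ _ _
    rw [Finset.prod_congr rfl fun i _ => h3 i]
    have h4 : ∀ i : Fin (n - 1), ∀ j ∈ Ioi i, χ ((s j - s i) * (u j - u i)) = -1 := by
      intro i j hj
      have hij : i ≠ j := (Finset.mem_Ioi.mp hj).ne
      have hss : s j - s i ≠ 0 := sub_ne_zero.mpr fun h => hij (hinj h).symm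
      have hc2 : (s j - s i) * (t i)⁻¹ * (t j)⁻¹ ≠ 0 :=
        mul_ne_zero (mul_ne_zero hss (inv_ne_zero (ht0 i))) (inv_ne_zero (ht0 j))
      have hkey : (s j - s i) * (u j - u i)
          = -(((s j - s i) * (t i)⁻¹ * (t j)⁻¹) ^ 2) := by
        simp only [hu]
        rw [hts i, hts j]
        have hti := ht0 i
        have htj := ht0 j
        field_simp
        ring
      rw [hkey, neg_eq_neg_one_mul, map_mul, hχm1, hχ, quadraticChar_sq_one' hc2, mul_one]
    rw [Finset.prod_congr rfl fun i _ => Finset.prod_congr rfl (h4 i)]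
    simp only [Finset.prod_const]
    rw [Finset.prod_pow_eq_pow_sum]
    congr 1
    have h5 : ∀ i : Fin (n - 1), #(Ioi i) = (n - 1) - 1 - (i : ℕ) := fun i => Fin.card_Ioi i
    rw [Finset.sum_congr rfl fun i _ => h5 i]
    rw [Fin.sum_univ_eq_sum_range (fun i => (n - 1) - 1 - i) (n - 1)]
    exact Finset.sum_range_reflect (fun j => j) (n - 1)
  have hLHS : legendreSym p ((B.det.val : ℤ)) = χ B.det := by
    simp only [legendreSym, hχ]
    congr 1
    push_cast
    simp [ZMod.natCast_val, ZMod.cast_id]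
  have hRHS : legendreSym p (-2) = ZMod.χ₈' (p : ZMod 8) := by
    exact legendreSym.at_neg_two hp2
  rw [hLHS, hRHS, hdet]
  rw [map_mul, map_mul, map_mul, hχC, hχS, mul_one, mul_one, ← map_mul, hχVU]
  rw [ZMod.χ₈'_nat_eq_if_mod_eight]
  have hp8 : p % 8 = 3 ∨ p % 8 = 7 := by omega
  rcases hp8 with hp8 | hp8
  · obtain ⟨m, hm⟩ : ∃ m, n = 4 * m + 1 := ⟨n / 4, by omega⟩
    rw [show n - 1 = 4 * m from by omega]
    rw [Even.neg_one_pow (even_T m)]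
    simp [show p % 2 = 1 from by omega, hp8]
  · obtain ⟨m, hm⟩ : ∃ m, n = 4 * m + 3 := ⟨n / 4, by omega⟩
    rw [show n - 1 = 4 * m + 2 from by omega]
    rw [Odd.neg_one_pow (odd_T m)]
    simp [show p % 2 = 1 from by omega, hp8]
end

section
/- Let p be an odd prime, q = p^f, n = (q-1)/2, and for r ∈ [0, q-2] with base-p digits r = Σ_{i=0}^{f-1} r_i p^i let s(r) = Σ r_i be the digit sum. Then for every r ∈ [0, n-1], s(n) + s(n+r) > s(r). -/
/-!
Since `2n + 1 = p ^ f`, we have `n + (n + r) = p ^ f + (r - 1)`. Both summands are below `p ^ f`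
while their sum is not, so their addition carries out of position `f`; by Kummer's theorem each
carry lowers the digit sum by `p - 1`, whence
`s(n) + s(n + r) > s(p ^ f + (r - 1)) = s(r - 1) + 1 ≥ s(r)`.
For `r = 0` it suffices that `s(n) > 0`.
-/

namespace Nat

section Prime

variable {p : ℕ} [Fact p.Prime]

theorem sum_digits_add_add_sub_one_mul_padicValNat_choose (a b : ℕ) :
    (p.digits (a + b)).sum + (p - 1) * padicValNat p ((a + b).choose b) =
      (p.digits a).sum + (p.digits b).sum := by
  have hfac : padicValNat p (a + b)! =
      padicValNat p ((a + b).choose b) + padicValNat p a ! + padicValNat p b ! := by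
    rw [← add_choose_mul_factorial_mul_factorial a b,
      padicValNat.mul (mul_ne_zero (choose_pos (le_add_left b a)).ne' (factorial_ne_zero a))
        (factorial_ne_zero b),
      padicValNat.mul (choose_pos (le_add_left b a)).ne' (factorial_ne_zero a)]
  have legendre (x : ℕ) : (p - 1) * padicValNat p x ! + (p.digits x).sum = x := by
    rw [sub_one_mul_padicValNat_factorial, Nat.sub_add_cancel (digit_sum_le p x)]
  have ha := legendre a
  have hb := legendre b
  have hab := legendre (a + b)
  rw [hfac, mul_add, mul_add] at hab
  omega

theorem sum_digits_add_le (a b : ℕ) :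
    (p.digits (a + b)).sum ≤ (p.digits a).sum + (p.digits b).sum :=
  (sum_digits_add_add_sub_one_mul_padicValNat_choose (p := p) a b).symm ▸ le_add_right _ _

theorem sum_digits_add_lt_of_pow_le {f a b : ℕ} (ha : a < p ^ f) (hb : b < p ^ f)
    (hab : p ^ f ≤ a + b) :
    (p.digits (a + b)).sum < (p.digits a).sum + (p.digits b).sum := by
  have hp := (Fact.out : p.Prime).one_lt
  have hf : f ≠ 0 := by
    rintro rfl
    simp only [pow_zero, lt_one_iff] at ha hb hab
    omega
  have hcarry : 0 < padicValNat p ((a + b).choose b) := by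
    rw [padicValNat_choose' (lt_succ_self _), Finset.card_pos]
    refine ⟨f, Finset.mem_filter.2 ⟨Finset.mem_Ico.2 ⟨one_le_iff_ne_zero.2 hf, ?_⟩, ?_⟩⟩
    · exact lt_succ_of_le (le_log_of_pow_le hp hab)
    · rwa [mod_eq_of_lt ha, mod_eq_of_lt hb, add_comm]
  have := sum_digits_add_add_sub_one_mul_padicValNat_choose (p := p) a b
  have : 0 < (p - 1) * padicValNat p ((a + b).choose b) := Nat.mul_pos (by omega) hcarry
  omega

end Prime

theorem sum_digits_pos {b n : ℕ} (hn : n ≠ 0) : 0 < (b.digits n).sum :=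
  List.sum_pos_iff_exists_pos_nat.2
    ⟨_, List.getLast_mem (digits_ne_nil_iff_ne_zero.2 hn),
      pos_of_ne_zero (getLast_digit_ne_zero b hn)⟩

theorem sum_digits_pow_add {b f t : ℕ} (hb : 1 < b) (ht : t < b ^ f) :
    (b.digits (b ^ f + t)).sum = (b.digits t).sum + 1 := by
  have hlen := (digits_length_le_iff hb t).2 ht
  have := digits_append_zeroes_append_digits (b := b) (n := t) (m := 1)
    (k := f - (b.digits t).length) hb one_pos
  rw [Nat.add_sub_cancel' hlen, mul_one, add_comm] at this
  rw [← this]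
  simp [digits_of_lt b 1 one_ne_zero hb]

end Nat

theorem digit_sum_ineq_general (p f n : ℕ) (hp : p.Prime)
    (hn : p ^ f = 2 * n + 1) :
    ∀ r < n, (Nat.digits p r).sum < (Nat.digits p n).sum + (Nat.digits p (n + r)).sum := by
  have := Fact.mk hp
  intro r hr
  rcases Nat.eq_zero_or_pos r with rfl | hr0
  · simpa using Nat.sum_digits_pos (b := p) (by omega : n ≠ 0)
  calc (p.digits r).sum
      ≤ (p.digits (r - 1)).sum + 1 := by
        simpa [Nat.sub_add_cancel hr0, Nat.digits_of_lt p 1 one_ne_zero hp.one_lt]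
          using Nat.sum_digits_add_le (p := p) (r - 1) 1
    _ = (p.digits (n + (n + r))).sum := by
        rw [show n + (n + r) = p ^ f + (r - 1) by omega,
          Nat.sum_digits_pow_add hp.one_lt (by omega)]
    _ < (p.digits n).sum + (p.digits (n + r)).sum :=
        Nat.sum_digits_add_lt_of_pow_le (f := f) (by omega) (by omega) (by omega)

theorem digit_sum_ineq (p f n : ℕ) (hp : p.Prime) (hodd : p ≠ 2) (hf : 1 ≤ f)
    (hn : p ^ f = 2 * n + 1) :
    ∀ r < n, (Nat.digits p r).sum < (Nat.digits p n).sum + (Nat.digits p (n + r)).sum :=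
  digit_sum_ineq_general p f n hp hn
end

section
/- Let q be an odd prime power, ψ a nontrivial multiplicative character of F_q, and χ a generator of the character group of F_q^×. Then ∏_{r=0}^{q-2} J(ψ, χ^r) = G(ψ)^{q-1} / q, where J denotes the Jacobi sum and G the Gauss sum. -/
/-!
For every character `φ ≠ ψ⁻¹` one has `g(ψφ) J(ψ,φ) = g(ψ) g(φ)`, and for `φ = ψ⁻¹` the same
identity holds once the left side is multiplied by `q`: here `g(1) = -1` (the trivial character
vanishes at `0`), `J(ψ,ψ⁻¹) = -ψ(-1)` and `g(ψ) g(ψ⁻¹) = ψ(-1) q`. In the product over all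
characters `φ`, the Gauss sums `g(ψφ)` and `g(φ)` run over the same nonzero values and cancel,
leaving `q ∏_φ J(ψ,φ) = g(ψ)^(q-1)`.
-/

open Finset

theorem Finset.prod_range_card_pow_eq_prod {G M : Type*} [Group G] [Fintype G] [CommMonoid M]
    {g : G} (hg : ∀ x : G, ∃ n : ℕ, x = g ^ n) (f : G → M) :
    ∏ r ∈ range (Fintype.card G), f (g ^ r) = ∏ x, f x := by
  classical
  have hord : orderOf g = Fintype.card G := by
    rw [orderOf_eq_card_of_forall_mem_powers fun x ↦ (hg x).imp fun n h ↦ h.symm,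
      Nat.card_eq_fintype_card]
  have himage : (range (orderOf g)).image (g ^ ·) = univ :=
    IsCyclic.image_range_orderOf fun x ↦
      (hg x).elim fun n h ↦ h ▸ Subgroup.npow_mem_zpowers g n
  rw [← hord, ← prod_image (fun i hi j hj ↦ pow_injOn_Iio_orderOf (by simpa using hi)
    (by simpa using hj)), himage]

lemma AddChar.IsPrimitive.ne_one {R R' : Type*} [CommRing R] [Nontrivial R] [CommMonoid R']
    {e : AddChar R R'} (he : e.IsPrimitive) : e ≠ 1 := by
  simpa using he one_ne_zero

section GaussJacobi

variable {F F' : Type*} [Field F] [Fintype F] [Field F'] {ψ : MulChar F F'} {e : AddChar F F'}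

lemma gaussSum_ne_zero_of_isPrimitive (hq : (Fintype.card F : F') ≠ 0) (he : e.IsPrimitive)
    (φ : MulChar F F') : gaussSum φ e ≠ 0 := by
  rcases eq_or_ne φ 1 with rfl | hφ
  · rw [gaussSum_one_left he.ne_one]
    exact neg_ne_zero.2 one_ne_zero
  · exact gaussSum_ne_zero_of_nontrivial hq hφ he

lemma gaussSum_mul_gaussSum_inv (hψ : ψ ≠ 1) (he : e.IsPrimitive) :
    gaussSum ψ e * gaussSum ψ⁻¹ e = ψ (-1) * Fintype.card F := by
  rw [← mul_gaussSum_inv_eq_gaussSum ψ⁻¹ e, MulChar.inv_apply', inv_neg_one, mul_left_comm,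
    gaussSum_mul_gaussSum_eq_card hψ he]

lemma jacobiSum_mul_inv_mul_card (hψ : ψ ≠ 1) (he : e.IsPrimitive) :
    gaussSum (ψ * ψ⁻¹) e * jacobiSum ψ ψ⁻¹ * Fintype.card F = gaussSum ψ e * gaussSum ψ⁻¹ e := by
  rw [mul_inv_cancel, gaussSum_one_left he.ne_one, jacobiSum_nontrivial_inv hψ,
    gaussSum_mul_gaussSum_inv hψ he]
  ring

variable [Fintype (MulChar F F')]

lemma prod_gaussSum_mul_jacobiSum_mul_card (hψ : ψ ≠ 1) (he : e.IsPrimitive) :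
    (∏ φ, gaussSum (ψ * φ) e * jacobiSum ψ φ) * Fintype.card F
      = ∏ φ, gaussSum ψ e * gaussSum φ e := by
  classical
  rw [← mul_prod_erase univ _ (mem_univ ψ⁻¹),
    ← mul_prod_erase univ (fun φ ↦ gaussSum ψ e * gaussSum φ e) (mem_univ ψ⁻¹),
    ← jacobiSum_mul_inv_mul_card hψ he, mul_right_comm]
  refine congrArg _ (prod_congr rfl fun φ hφ ↦ jacobiSum_mul_nontrivial (fun h ↦ ?_) e)
  exact ne_of_mem_erase hφ (eq_inv_of_mul_eq_one_right h)

theorem prod_jacobiSum_eq_gaussSum_pow_div (hq : (Fintype.card F : F') ≠ 0) (hψ : ψ ≠ 1)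
    (he : e.IsPrimitive) :
    ∏ φ, jacobiSum ψ φ = gaussSum ψ e ^ Fintype.card (MulChar F F') / Fintype.card F := by
  have hG : ∏ φ, gaussSum φ e ≠ 0 :=
    prod_ne_zero_iff.2 fun φ _ ↦ gaussSum_ne_zero_of_isPrimitive hq he φ
  have hshift : ∏ φ, gaussSum (ψ * φ) e = ∏ φ, gaussSum φ e :=
    Fintype.prod_equiv (Equiv.mulLeft ψ) _ _ fun _ ↦ rfl
  have key := prod_gaussSum_mul_jacobiSum_mul_card hψ he
  rw [prod_mul_distrib, prod_mul_distrib, hshift, prod_const, card_univ] at key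
  rw [eq_div_iff hq]
  exact mul_left_cancel₀ hG (by linear_combination key)

end GaussJacobi

theorem prod_jacobiSum_general (F : Type*) [Field F] [Fintype F]
    (ψ χ : MulChar F ℂ) (hψ : ψ ≠ 1) (hχ : ∀ ψ' : MulChar F ℂ, ∃ r : ℕ, ψ' = χ ^ r)
    (e : AddChar F ℂ) (he : e.IsPrimitive) :
    ∏ r ∈ Finset.range (Fintype.card F - 1), jacobiSum ψ (χ ^ r)
      = gaussSum ψ e ^ (Fintype.card F - 1) / (Fintype.card F : ℂ) := by
  classical
  let _ : Fintype (MulChar F ℂ) := Fintype.ofFinite _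
  have hcard : Fintype.card (MulChar F ℂ) = Fintype.card F - 1 := by
    rw [← Nat.card_eq_fintype_card, MulChar.card_eq_card_units_of_hasEnoughRootsOfUnity,
      Nat.card_eq_fintype_card, Fintype.card_units]
  rw [← hcard, prod_range_card_pow_eq_prod hχ,
    prod_jacobiSum_eq_gaussSum_pow_div (Nat.cast_ne_zero.2 Fintype.card_ne_zero) hψ he]

theorem prod_jacobiSum (F : Type*) [Field F] [Fintype F] [DecidableEq F]
    (hodd : Odd (Fintype.card F))
    (ψ χ : MulChar F ℂ) (hψ : ψ ≠ 1) (hχ : ∀ ψ' : MulChar F ℂ, ∃ r : ℕ, ψ' = χ ^ r)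
    (e : AddChar F ℂ) (he : e.IsPrimitive) :
    ∏ r ∈ Finset.range (Fintype.card F - 1), jacobiSum ψ (χ ^ r)
      = gaussSum ψ e ^ (Fintype.card F - 1) / (Fintype.card F : ℂ) :=
  prod_jacobiSum_general F ψ χ hψ hχ e he
end

section
/- Let q be an odd prime power, ψ a nontrivial multiplicative character of F_q, and χ a generator of the character group of F_q^×. Then Σ_{r=0}^{q-2} 1/J(ψ, χ^r) = ((1-q)/q)·(1 + ψ(-1)). -/
/-!
For `η ≠ 1` with `ψη ≠ 1` one has `J(ψ, η) J(ψ⁻¹, η⁻¹) = q`, so `1 / J(ψ, η) = J(ψ⁻¹, η⁻¹) / q`.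
Summed over all characters `η`, the Jacobi sums `J(ψ⁻¹, η⁻¹)` cancel by orthogonality, so the sum
of `1 / J(ψ, η) - J(ψ⁻¹, η⁻¹) / q` equals the sum of its two exceptional terms `η = 1` and
`η = ψ⁻¹`, where `J(ψ, 1) = J(ψ⁻¹, 1) = -1` and `J(ψ, ψ⁻¹) = J(ψ⁻¹, ψ) = -ψ(-1)`.
-/

open Finset

theorem Finset.sum_range_card_pow_eq_sum {G M : Type*} [Group G] [Fintype G] [AddCommMonoid M]
    {g : G} (hg : ∀ x : G, x ∈ Subgroup.zpowers g) (f : G → M) :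
    ∑ r ∈ range (Nat.card G), f (g ^ r) = ∑ x, f x := by
  classical
  have hinj : Set.InjOn (g ^ ·) (range (Nat.card G)) := by
    rw [← orderOf_eq_card_of_forall_mem_zpowers hg]
    simpa using pow_injOn_Iio_orderOf
  rw [← IsCyclic.image_range_card hg, sum_image hinj]

theorem MulChar.sum_apply_eq_zero_of_ne_one {M R : Type*} [CommMonoid M] [Finite M] [CommRing R]
    [IsDomain R] [HasEnoughRootsOfUnity R (Monoid.exponent Mˣ)] [Fintype (MulChar M R)]
    {a : M} (ha : a ≠ 1) : ∑ χ : MulChar M R, χ a = 0 := by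
  obtain ⟨χ, hχ⟩ := exists_apply_ne_one_of_hasEnoughRootsOfUnity M R ha
  refine eq_zero_of_mul_eq_self_left hχ ?_
  simp only [mul_sum, ← mul_apply]
  exact Fintype.sum_bijective _ (Group.mulLeft_bijective χ) _ _ fun _ ↦ rfl

theorem sum_jacobiSum_eq_zero {R R' : Type*} [CommRing R] [Fintype R] [Nontrivial R] [CommRing R']
    [IsDomain R'] [HasEnoughRootsOfUnity R' (Monoid.exponent Rˣ)] [Fintype (MulChar R R')]
    (χ : MulChar R R') : ∑ φ : MulChar R R', jacobiSum χ φ = 0 := by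
  simp only [jacobiSum]
  rw [sum_comm]
  refine sum_eq_zero fun x _ ↦ ?_
  rw [← mul_sum]
  rcases eq_or_ne x 0 with rfl | hx
  · rw [MulChar.map_zero, zero_mul]
  · rw [MulChar.sum_apply_eq_zero_of_ne_one (by simpa using hx), mul_zero]

theorem MulChar.apply_neg_one_inv {R R' : Type*} [CommRing R] [CommGroupWithZero R']
    (χ : MulChar R R') : (χ (-1))⁻¹ = χ (-1) :=
  inv_eq_of_mul_eq_one_right <| by rw [← map_mul, neg_one_mul, neg_neg, map_one]

theorem MulChar.inv_apply_neg_one {R R' : Type*} [CommRing R] [CommGroupWithZero R']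
    (χ : MulChar R R') : χ⁻¹ (-1) = χ (-1) := by
  rw [inv_apply_eq_inv', apply_neg_one_inv]

section FiniteField

variable {F F' : Type*} [Field F] [Fintype F] [Field F']

theorem FiniteField.natCast_card_ne_zero (h : ringChar F' ≠ ringChar F) :
    (Fintype.card F : F') ≠ 0 := by
  obtain ⟨n, hp, hc⟩ := FiniteField.card F (ringChar F)
  rw [hc, Nat.cast_pow]
  exact pow_ne_zero _ fun H ↦ h (CharP.ringChar_of_prime_eq_zero hp H)

theorem MulChar.card_eq_card_sub_one [HasEnoughRootsOfUnity F' (Monoid.exponent Fˣ)] :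
    Nat.card (MulChar F F') = Fintype.card F - 1 := by
  classical
  rw [card_eq_card_units_of_hasEnoughRootsOfUnity, Nat.card_eq_fintype_card, Fintype.card_units]

theorem jacobiSum_nontrivial_one {χ : MulChar F F'} (hχ : χ ≠ 1) :
    jacobiSum χ 1 = -1 := by
  rw [jacobiSum_comm, jacobiSum_one_nontrivial hχ]

theorem inv_jacobiSum_eq_div (h : ringChar F' ≠ ringChar F) {χ φ : MulChar F F'} (hχ : χ ≠ 1)
    (hφ : φ ≠ 1) (hχφ : χ * φ ≠ 1) :
    (jacobiSum χ φ)⁻¹ = jacobiSum χ⁻¹ φ⁻¹ / Fintype.card F := by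
  have hmul := jacobiSum_mul_jacobiSum_inv h hχ hφ hχφ
  have hcard := FiniteField.natCast_card_ne_zero h
  have hJ : jacobiSum χ φ ≠ 0 := left_ne_zero_of_mul (hmul ▸ hcard)
  rw [eq_div_iff hcard, ← hmul, inv_mul_cancel_left₀ hJ]

end FiniteField

theorem sum_inv_jacobiSum_general (F : Type*) [Field F] [Fintype F]
    (ψ χ : MulChar F ℂ) (hψ : ψ ≠ 1) (hχ : ∀ ψ' : MulChar F ℂ, ∃ r : ℕ, ψ' = χ ^ r) :
    ∑ r ∈ Finset.range (Fintype.card F - 1), (jacobiSum ψ (χ ^ r))⁻¹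
      = ((1 - (Fintype.card F : ℂ)) / (Fintype.card F : ℂ)) * (1 + ψ (-1)) := by
  have : NeZero (Monoid.exponent Fˣ) := ⟨Monoid.exponent_ne_zero_of_finite⟩
  let : Fintype (MulChar F ℂ) := Fintype.ofFinite _
  have hring : ringChar ℂ ≠ ringChar F := by
    simpa only [ringChar.eq_zero] using (CharP.ringChar_ne_zero_of_finite F).symm
  have hgen (η : MulChar F ℂ) : η ∈ Subgroup.zpowers χ := by
    obtain ⟨r, rfl⟩ := hχ η
    exact pow_mem (Subgroup.mem_zpowers χ) r
  have hψinv : ψ⁻¹ ≠ 1 := inv_ne_one.mpr hψ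
  have hdual : ∑ η : MulChar F ℂ, jacobiSum ψ⁻¹ η⁻¹ = 0 :=
    (Equiv.sum_comp (Equiv.inv _) (jacobiSum ψ⁻¹)).trans (sum_jacobiSum_eq_zero ψ⁻¹)
  calc ∑ r ∈ range (Fintype.card F - 1), (jacobiSum ψ (χ ^ r))⁻¹
      = ∑ η, ((jacobiSum ψ η)⁻¹ - jacobiSum ψ⁻¹ η⁻¹ / Fintype.card F) := by
        rw [← MulChar.card_eq_card_sub_one (F' := ℂ),
          sum_range_card_pow_eq_sum hgen fun η ↦ (jacobiSum ψ η)⁻¹, sum_sub_distrib,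
          ← sum_div, hdual, zero_div, sub_zero]
    _ = ((jacobiSum ψ 1)⁻¹ - jacobiSum ψ⁻¹ 1⁻¹ / Fintype.card F)
          + ((jacobiSum ψ ψ⁻¹)⁻¹ - jacobiSum ψ⁻¹ ψ⁻¹⁻¹ / Fintype.card F) := by
        refine Fintype.sum_eq_add 1 ψ⁻¹ hψinv.symm fun η ⟨hη, hηψ⟩ ↦ ?_
        rw [inv_jacobiSum_eq_div hring hψ hη fun h ↦ hηψ (eq_inv_of_mul_eq_one_right h), sub_self]
    _ = ((1 - (Fintype.card F : ℂ)) / (Fintype.card F : ℂ)) * (1 + ψ (-1)) := by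
        rw [inv_one, jacobiSum_nontrivial_one hψ, jacobiSum_nontrivial_one hψinv,
          jacobiSum_nontrivial_inv hψ, jacobiSum_nontrivial_inv hψinv, MulChar.inv_apply_neg_one,
          inv_neg, inv_neg, inv_one, MulChar.apply_neg_one_inv,
          sub_div, div_self (FiniteField.natCast_card_ne_zero hring)]
        ring

theorem sum_inv_jacobiSum (F : Type*) [Field F] [Fintype F] [DecidableEq F]
    (hodd : Odd (Fintype.card F))
    (ψ χ : MulChar F ℂ) (hψ : ψ ≠ 1) (hχ : ∀ ψ' : MulChar F ℂ, ∃ r : ℕ, ψ' = χ ^ r) :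
    ∑ r ∈ Finset.range (Fintype.card F - 1), (jacobiSum ψ (χ ^ r))⁻¹
      = ((1 - (Fintype.card F : ℂ)) / (Fintype.card F : ℂ)) * (1 + ψ (-1)) :=
  sum_inv_jacobiSum_general F ψ χ hψ hχ
end

section
/- Let q = p^f ≥ 3 be an odd prime power, F_q^× = {x_1 = 1, x_2, …, x_{q-1}}, and ψ a nontrivial multiplicative character of F_q. Then det[ψ(x_j - x_i)]_{2≤i,j≤q-1} = -((1 + ψ(-1))/q²)·G(ψ)^{q-1}. In particular, for ψ = φ the quadratic character, this matrix is singular if and only if q ≡ 3 (mod 4), and for q ≡ 1 (mod 4) its determinant equals -2 q^{(q-5)/2}. -/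
/-!
Let `C = (ψ (y - x))` over all of `F`. The determinant in question is the principal minor of `C`
away from `0` and `1`, i.e. the determinant of `C` with rows `0` and `1` replaced by identity
rows. The additive characters diagonalise `C + J / q`, with eigenvalue `1` at `t = 0` and
`ψ⁻¹ t * G(ψ)` at `t ≠ 0`, so `det (C + J / q) = ψ (-1) * G(ψ) ^ (q - 1)` by Wilson's theorem;
its inverse is `(J + (ψ⁻¹ (x - y))) / q` because the Jacobi sum `J(ψ, ψ⁻¹)` equals `-ψ (-1)`.
The row-replaced matrix is a rank-three perturbation of `C + J / q`, so the matrix determinant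
lemma leaves an explicit `3 × 3` determinant, `-(1 + ψ (-1)) / q ^ 2`. For the quadratic
character, `G(φ) ^ 2 = φ (-1) * q` and `φ (-1) = 1` exactly when `q ≡ 1 [MOD 4]`.
-/

open Finset Matrix

theorem Matrix.det_submatrix_compl_eq_det_ite_one {ι R : Type*} [Fintype ι] [DecidableEq ι]
    [CommRing R] (M : Matrix ι ι R) (p : ι → Prop) [DecidablePred p] :
    (M.submatrix ((↑) : {i // ¬p i} → ι) (↑)).det =
      (of fun i j => if p i then (1 : Matrix ι ι R) i j else M i j).det := by
  rw [← det_submatrix_equiv_self (Equiv.sumCompl p)]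
  have hblocks : (of fun i j => if p i then (1 : Matrix ι ι R) i j else M i j).submatrix
      (Equiv.sumCompl p) (Equiv.sumCompl p) =
        fromBlocks 1 0 (of fun (i : {i // ¬p i}) (j : {i // p i}) => M i j)
          (M.submatrix (↑) (↑)) := by
    ext (i | i) (j | j)
    · simp [one_apply, Subtype.ext_iff, i.2]
    · simp only [Equiv.sumCompl_apply_inl, Equiv.sumCompl_apply_inr, submatrix_apply, of_apply,
        i.2, if_true, fromBlocks_apply₁₂, zero_apply]
      exact one_apply_ne fun h => j.2 (h ▸ i.2)
    · simp [i.2]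
    · simp [i.2]
  rw [hblocks, det_fromBlocks_zero₁₂, det_one, one_mul]

namespace AddChar

variable {R K : Type*} [CommRing R] [Fintype R] [Field K]

def fourierMatrix (e : AddChar R K) : Matrix R R K := of fun x t => e (t * x)

theorem of_sub_mul_fourierMatrix [DecidableEq R] (e : AddChar R K) (f : R → K) :
    (of fun x y => f (y - x)) * e.fourierMatrix =
      e.fourierMatrix * diagonal fun t => ∑ z, f z * e.mulShift t z := by
  ext x t
  rw [mul_diagonal, Matrix.mul_apply, fourierMatrix, of_apply, Finset.mul_sum]
  refine Fintype.sum_equiv (Equiv.subRight x) _ _ fun y => ?_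
  simp only [of_apply, Equiv.subRight_apply, mulShift_apply]
  rw [mul_left_comm (e _), ← map_add_eq_mul, ← mul_add, add_sub_cancel]

theorem fourierMatrix_mul_of_neg [DecidableEq R] {e : AddChar R K} (he : e.IsPrimitive) :
    e.fourierMatrix * of (fun t y => e (-(t * y))) = (Fintype.card R : K) • 1 := by
  ext x y
  have h (t : R) : e (t * x) * e (-(t * y)) = e (t * (x - y)) := by
    rw [← map_add_eq_mul, mul_sub, sub_eq_add_neg]
  simp only [Matrix.mul_apply, fourierMatrix, of_apply, h, sum_mulShift _ he, sub_eq_zero,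
    Matrix.smul_apply, Matrix.one_apply, smul_eq_mul, mul_ite, mul_one, mul_zero]
  split_ifs <;> simp

theorem det_fourierMatrix_ne_zero [DecidableEq R] {e : AddChar R K} (he : e.IsPrimitive)
    (hR : (Fintype.card R : K) ≠ 0) : e.fourierMatrix.det ≠ 0 := by
  intro h
  have := congrArg det (fourierMatrix_mul_of_neg he)
  rw [det_mul, h, zero_mul, det_smul, det_one, mul_one] at this
  exact pow_ne_zero _ hR this.symm

theorem det_of_sub_eq_prod [DecidableEq R] {e : AddChar R K} (he : e.IsPrimitive)
    (hR : (Fintype.card R : K) ≠ 0) (f : R → K) :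
    (of fun x y => f (y - x)).det = ∏ t, ∑ z, f z * e.mulShift t z := by
  have := congrArg det (of_sub_mul_fourierMatrix e f)
  rw [det_mul, det_mul, mul_comm, det_diagonal] at this
  exact mul_left_cancel₀ (det_fourierMatrix_ne_zero he hR) this

end AddChar

theorem Fintype.prod_units_val_eq_prod {G₀ M : Type*} [GroupWithZero G₀] [Fintype G₀]
    [DecidableEq G₀] [CommMonoid M] (g : G₀ → M) (h0 : g 0 = 1) : ∏ u : G₀ˣ, g u = ∏ t, g t := by
  have hval : ∏ t ∈ univ.map ⟨Units.val, Units.val_injective⟩, g t = ∏ t, g t := by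
    refine Finset.prod_subset (subset_univ _) fun t _ ht => ?_
    obtain rfl : t = 0 := by
      by_contra h
      exact ht (mem_map.mpr ⟨Units.mk0 t h, mem_univ _, rfl⟩)
    exact h0
  rw [← hval, prod_map]
  rfl

def Units.neOneEquiv (G₀ : Type*) [GroupWithZero G₀] :
    {x : G₀ // ¬(x = 0 ∨ x = 1)} ≃ {u : G₀ˣ // u ≠ 1} where
  toFun x := ⟨Units.mk0 x (fun h => x.2 (.inl h)), fun h => x.2 (.inr congr(Units.val $h))⟩
  invFun u := ⟨u.1, by simp [u.2]⟩
  left_inv _ := rfl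
  right_inv _ := Subtype.ext (Units.ext rfl)

namespace MulChar

variable {F K : Type*} [Field F] [Field K]

theorem apply_mul_inv_apply (ψ : MulChar F K) {a : F} (ha : a ≠ 0) : ψ a * ψ⁻¹ a = 1 := by
  rw [inv_apply', ← map_mul, mul_inv_cancel₀ ha, map_one]

theorem inv_apply_neg_one_s19 (ψ : MulChar F K) : ψ⁻¹ (-1) = ψ (-1) := by
  rw [inv_apply', inv_neg, inv_one]

theorem sum_apply_sub [Fintype F] {ψ : MulChar F K} (hψ : ψ ≠ 1) (x : F) :
    ∑ y, ψ (y - x) = 0 :=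
  (Equiv.sum_comp (Equiv.subRight x) ψ).trans (sum_eq_zero_of_ne_one hψ)

theorem sum_sub_apply [Fintype F] {ψ : MulChar F K} (hψ : ψ ≠ 1) (x : F) :
    ∑ y, ψ (x - y) = 0 :=
  (Equiv.sum_comp (Equiv.subLeft x) ψ).trans (sum_eq_zero_of_ne_one hψ)

theorem sum_apply_mul_inv_apply_sub [Fintype F] {ψ : MulChar F K} (hψ : ψ ≠ 1) {c : F}
    (hc : c ≠ 0) : ∑ y, ψ y * ψ⁻¹ (y - c) = -1 := by
  have hscale (v : F) :
      ψ (c * v) * ψ⁻¹ (c * v - c) = ψ⁻¹ (-1) * (ψ v * ψ⁻¹ (1 - v)) := by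
    rw [show c * v - c = -1 * c * (1 - v) by ring, map_mul, map_mul, map_mul]
    linear_combination ψ⁻¹ (-1) * ψ v * ψ⁻¹ (1 - v) * ψ.apply_mul_inv_apply hc
  rw [← Fintype.sum_bijective (c * ·) (mulLeft_bijective₀ c hc) _ _ fun _ => rfl]
  simp only [hscale, ← mul_sum]
  rw [show ∑ v, ψ v * ψ⁻¹ (1 - v) = jacobiSum ψ ψ⁻¹ from rfl, jacobiSum_nontrivial_inv hψ,
    mul_neg, mul_comm, apply_mul_inv_apply _ (neg_ne_zero.mpr one_ne_zero)]

theorem sum_apply_sub_mul_inv_apply_sub [Fintype F] [DecidableEq F] {ψ : MulChar F K}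
    (hψ : ψ ≠ 1) (x z : F) :
    ∑ y, ψ (y - x) * ψ⁻¹ (y - z) = if x = z then (Fintype.card F : K) - 1 else -1 := by
  rw [← Equiv.sum_comp (Equiv.addRight x)]
  simp only [Equiv.coe_addRight, add_sub_cancel_right, show ∀ y, y + x - z = y - (z - x) from
    fun y => by ring]
  split_ifs with h
  · rw [h, sub_self]
    simp only [sub_zero, ← mul_apply, mul_inv_cancel, sum_one_eq_card_units,
      Fintype.card_units, Nat.cast_sub Fintype.card_pos, Nat.cast_one]
  · exact sum_apply_mul_inv_apply_sub hψ (sub_ne_zero.mpr (Ne.symm h))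

section DiffMatrix

variable [Fintype F] (ψ : MulChar F K)

/-- Adding `J / q` moves the eigenvalue `0` of `(ψ (y - x))` at the trivial additive character
to `1`. -/
def augDiffMatrix : Matrix F F K := of fun x y => ψ (y - x) + (Fintype.card F : K)⁻¹

theorem sum_add_inv_card_mul_mulShift_zero (hψ : ψ ≠ 1) [NeZero (Fintype.card F : K)]
    (e : AddChar F K) : ∑ z, (ψ z + (Fintype.card F : K)⁻¹) * e.mulShift 0 z = 1 := by
  simp only [AddChar.mulShift_zero, AddChar.one_apply, mul_one, sum_add_distrib,
    sum_eq_zero_of_ne_one hψ, sum_const, card_univ, nsmul_eq_mul, zero_add]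
  exact mul_inv_cancel₀ (NeZero.ne _)

theorem sum_add_inv_card_mul_mulShift_units {e : AddChar F K} (he : e.IsPrimitive) (u : Fˣ) :
    ∑ z, (ψ z + (Fintype.card F : K)⁻¹) * e.mulShift u z = ψ⁻¹ u * gaussSum ψ e := by
  rw [← gaussSum_mulShift_eq, gaussSum]
  simp only [add_mul, sum_add_distrib, ← mul_sum, AddChar.sum_eq_zero_of_ne_one (he u.ne_zero),
    mul_zero, add_zero]

variable [DecidableEq F]

def updateCols : Matrix F (Fin 3) K :=
  of fun x => ![(1 : Matrix F F K) x 0, (1 : Matrix F F K) x 1, 1]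

def updateRows : Matrix (Fin 3) F K :=
  of ![fun y => (1 : Matrix F F K) 0 y - ψ (y - 0), fun y => (1 : Matrix F F K) 1 y - ψ (y - 1),
    fun _ => -(Fintype.card F : K)⁻¹]

theorem ite_eq_augDiffMatrix_add_updateCols_mul_updateRows :
    (of fun x y => if x = 0 ∨ x = 1 then (1 : Matrix F F K) x y else ψ (y - x)) =
      augDiffMatrix ψ + (updateCols : Matrix F (Fin 3) K) * updateRows ψ := by
  ext x y
  rw [Matrix.add_apply, Matrix.mul_apply, Fin.sum_univ_three]
  simp only [of_apply, augDiffMatrix, updateCols, updateRows, Matrix.cons_val_zero,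
    Matrix.cons_val_one, Matrix.cons_val_two, Matrix.head_cons, Matrix.tail_cons, Matrix.one_apply]
  by_cases hx0 : x = 0
  · subst hx0
    simp only [zero_ne_one, or_false, if_true, if_false, sub_zero, one_mul, zero_mul, add_zero]
    ring
  by_cases hx1 : x = 1
  · subst hx1
    simp only [one_ne_zero, or_true, if_true, if_false, zero_mul, one_mul, zero_add]
    ring
  simp [hx0, hx1]

variable [NeZero (Fintype.card F : K)]

theorem det_augDiffMatrix (hψ : ψ ≠ 1) {e : AddChar F K} (he : e.IsPrimitive) :
    (augDiffMatrix ψ).det = ψ (-1) * gaussSum ψ e ^ (Fintype.card F - 1) := by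
  rw [augDiffMatrix, AddChar.det_of_sub_eq_prod he (NeZero.ne _) (fun z => ψ z + _),
    ← Fintype.prod_units_val_eq_prod _ (sum_add_inv_card_mul_mulShift_zero ψ hψ e)]
  simp only [sum_add_inv_card_mul_mulShift_units ψ he, prod_mul_distrib, prod_const, card_univ,
    Fintype.card_units, ← map_prod, ← Units.coe_prod, FiniteField.prod_univ_units_id_eq_neg_one,
    Units.val_neg, Units.val_one, inv_apply_neg_one_s19]

theorem augDiffMatrix_mul_eq_one (hψ : ψ ≠ 1) :
    augDiffMatrix ψ * of (fun x y => (Fintype.card F : K)⁻¹ * (1 + ψ⁻¹ (x - y))) = 1 := by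
  have hq : (Fintype.card F : K) ≠ 0 := NeZero.ne _
  set q := (Fintype.card F : K)
  ext x z
  have hsum (y : F) : augDiffMatrix ψ x y * (q⁻¹ * (1 + ψ⁻¹ (y - z))) = q⁻¹ * ψ (y - x) +
      q⁻¹ * (ψ (y - x) * ψ⁻¹ (y - z)) + q⁻¹ * q⁻¹ + q⁻¹ * q⁻¹ * ψ⁻¹ (y - z) := by
    simp only [augDiffMatrix, of_apply]
    ring
  simp only [Matrix.mul_apply, of_apply, hsum, sum_add_distrib, ← mul_sum, sum_const, card_univ,
    sum_apply_sub_mul_inv_apply_sub hψ, sum_apply_sub hψ, sum_apply_sub (inv_ne_one.mpr hψ),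
    nsmul_eq_mul, Matrix.one_apply]
  split_ifs <;> field_simp <;> ring

theorem inv_augDiffMatrix (hψ : ψ ≠ 1) :
    (augDiffMatrix ψ)⁻¹ = of fun x y => (Fintype.card F : K)⁻¹ * (1 + ψ⁻¹ (x - y)) :=
  inv_eq_right_inv (augDiffMatrix_mul_eq_one ψ hψ)

theorem sum_inv_augDiffMatrix_apply_left (hψ : ψ ≠ 1) (x : F) :
    ∑ y, (augDiffMatrix ψ)⁻¹ y x = 1 := by
  simp only [inv_augDiffMatrix ψ hψ, of_apply, ← mul_sum, sum_add_distrib,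
    sum_apply_sub (inv_ne_one.mpr hψ), sum_const, card_univ, nsmul_eq_mul, mul_one, add_zero]
  exact inv_mul_cancel₀ (NeZero.ne _)

theorem sum_inv_augDiffMatrix_apply_right (hψ : ψ ≠ 1) (y : F) :
    ∑ x, (augDiffMatrix ψ)⁻¹ y x = 1 := by
  simp only [inv_augDiffMatrix ψ hψ, of_apply, ← mul_sum, sum_add_distrib,
    sum_sub_apply (inv_ne_one.mpr hψ), sum_const, card_univ, nsmul_eq_mul, mul_one, add_zero]
  exact inv_mul_cancel₀ (NeZero.ne _)

theorem sum_sub_apply_sub_mul_inv_augDiffMatrix (hψ : ψ ≠ 1) (s t : F) :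
    ∑ y, ((1 : Matrix F F K) s y - ψ (y - s)) * (augDiffMatrix ψ)⁻¹ y t =
      (augDiffMatrix ψ)⁻¹ s t - (1 : Matrix F F K) s t + (Fintype.card F : K)⁻¹ := by
  have hrow (y : F) : ψ (y - s) = augDiffMatrix ψ s y - (Fintype.card F : K)⁻¹ := by
    simp [augDiffMatrix]
  have hAA : augDiffMatrix ψ * (augDiffMatrix ψ)⁻¹ = 1 :=
    inv_augDiffMatrix ψ hψ ▸ augDiffMatrix_mul_eq_one ψ hψ
  simp only [hrow, sub_mul, sum_sub_distrib, ← mul_sum, sum_inv_augDiffMatrix_apply_left ψ hψ,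
    ← Matrix.mul_apply, hAA, Matrix.one_mul]
  ring

theorem updateRows_mul_inv_augDiffMatrix (hψ : ψ ≠ 1) :
    updateRows ψ * (augDiffMatrix ψ)⁻¹ = of ![
      fun t => (augDiffMatrix ψ)⁻¹ 0 t - (1 : Matrix F F K) 0 t + (Fintype.card F : K)⁻¹,
      fun t => (augDiffMatrix ψ)⁻¹ 1 t - (1 : Matrix F F K) 1 t + (Fintype.card F : K)⁻¹,
      fun _ => -(Fintype.card F : K)⁻¹] := by
  ext i t
  rw [Matrix.mul_apply]
  fin_cases i
  · simpa [updateRows] using sum_sub_apply_sub_mul_inv_augDiffMatrix ψ hψ 0 t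
  · simpa [updateRows] using sum_sub_apply_sub_mul_inv_augDiffMatrix ψ hψ 1 t
  · simp [updateRows, ← mul_sum, sum_inv_augDiffMatrix_apply_left ψ hψ]

theorem one_add_updateRows_mul_inv_mul_updateCols (hψ : ψ ≠ 1) :
    1 + updateRows ψ * (augDiffMatrix ψ)⁻¹ * (updateCols : Matrix F (Fin 3) K) =
      !![2 * (Fintype.card F : K)⁻¹, (2 + ψ (-1)) * (Fintype.card F : K)⁻¹, 1;
        3 * (Fintype.card F : K)⁻¹, 2 * (Fintype.card F : K)⁻¹, 1;
        -(Fintype.card F : K)⁻¹, -(Fintype.card F : K)⁻¹, 0] := by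
  rw [updateRows_mul_inv_augDiffMatrix ψ hψ]
  ext i j
  rw [Matrix.add_apply, Matrix.mul_apply]
  have hq : (Fintype.card F : K) ≠ 0 := NeZero.ne _
  fin_cases i <;> fin_cases j <;>
    simp [updateCols, Matrix.one_apply, sum_add_distrib, sum_sub_distrib,
      sum_inv_augDiffMatrix_apply_right ψ hψ, hq] <;>
    simp [inv_augDiffMatrix ψ hψ, inv_apply_neg_one_s19] <;> ring

theorem det_of_sub_units_ne_one (hψ : ψ ≠ 1) {e : AddChar F K} (he : e.IsPrimitive) :
    (of fun a b : {u : Fˣ // u ≠ 1} => ψ (((b : Fˣ) : F) - ((a : Fˣ) : F))).det =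
      -((1 + ψ (-1)) / (Fintype.card F : K) ^ 2) * gaussSum ψ e ^ (Fintype.card F - 1) := by
  have hA : IsUnit (augDiffMatrix ψ).det :=
    isUnit_det_of_right_inverse (augDiffMatrix_mul_eq_one ψ hψ)
  have hsq : ψ (-1) * ψ (-1) = 1 := by rw [← map_mul, neg_mul_neg, mul_one, map_one]
  rw [← det_submatrix_equiv_self (Units.neOneEquiv F)]
  erw [det_submatrix_compl_eq_det_ite_one (of fun x y : F => ψ (y - x)) (fun x => x = 0 ∨ x = 1)]
  simp only [of_apply]
  rw [ite_eq_augDiffMatrix_add_updateCols_mul_updateRows, det_add_mul _ _ hA,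
    one_add_updateRows_mul_inv_mul_updateCols ψ hψ, det_augDiffMatrix ψ hψ he, det_fin_three]
  simp only [Fin.isValue, of_apply, cons_val', cons_val_zero, cons_val_fin_one, cons_val_one,
    Matrix.cons_val, mul_zero, mul_one, mul_neg, sub_neg_eq_add, zero_add, sub_zero, one_mul,
    neg_mul]
  linear_combination -gaussSum ψ e ^ (Fintype.card F - 1) * (Fintype.card F : K)⁻¹ ^ 2 * hsq

end DiffMatrix

end MulChar

theorem MulChar.apply_eq_quadraticChar {F R : Type*} [Field F] [Fintype F] [DecidableEq F]
    [CommRing R] [NoZeroDivisors R] [Nontrivial R] {χ : MulChar F R} (hχ : χ ≠ 1)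
    (hχ2 : χ ^ 2 = 1) (a : F) : χ a = quadraticChar F a := by
  have hsquare {b : F} (hb : b ≠ 0) (hsq : IsSquare b) : χ b = 1 := by
    obtain ⟨c, rfl⟩ := hsq
    rw [← sq, map_pow, ← pow_apply' χ two_ne_zero, hχ2,
      one_apply (Ne.isUnit (left_ne_zero_of_mul hb))]
  obtain ⟨c, hc⟩ := ne_one_iff.mp hχ
  have hc' : χ c = -1 := ((isQuadratic_iff_sq_eq_one.mpr hχ2 c).resolve_left
    (c.isUnit.map χ).ne_zero).resolve_left hc
  by_cases ha : a = 0
  · simp [ha]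
  by_cases hsa : IsSquare a
  · rw [hsquare ha hsa, (quadraticChar_one_iff_isSquare ha).mpr hsa, Int.cast_one]
  have hsc : ¬IsSquare (c : F) := fun h => hc (hsquare c.ne_zero h)
  have hac : IsSquare (a * c) := by
    rw [← quadraticChar_one_iff_isSquare (mul_ne_zero ha c.ne_zero), map_mul,
      quadraticChar_neg_one_iff_not_isSquare.mpr hsa,
      quadraticChar_neg_one_iff_not_isSquare.mpr hsc]
    rfl
  have := hsquare (mul_ne_zero ha c.ne_zero) hac
  rw [map_mul, hc'] at this
  rw [quadraticChar_neg_one_iff_not_isSquare.mpr hsa, Int.cast_neg, Int.cast_one]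
  linear_combination -this

theorem det_D_q_minus_general (F : Type*) [Field F] [Fintype F] [DecidableEq F]
    (hodd : Odd (Fintype.card F))
    (ψ : MulChar F ℂ) (hψ : ψ ≠ 1) (e : AddChar F ℂ) (he : e.IsPrimitive)
    (φ : MulChar F ℂ) (hφ2 : φ ^ 2 = 1) (hφ1 : φ ≠ 1) :
    (Matrix.of fun a b : {u : Fˣ // u ≠ 1} => ψ (((b : Fˣ) : F) - ((a : Fˣ) : F))).det =
        -((1 + ψ (-1)) / (Fintype.card F : ℂ) ^ 2) * gaussSum ψ e ^ (Fintype.card F - 1) ∧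
      ((Matrix.of fun a b : {u : Fˣ // u ≠ 1} => φ (((b : Fˣ) : F) - ((a : Fˣ) : F))).det = 0 ↔
        Fintype.card F % 4 = 3) ∧
      (Fintype.card F % 4 = 1 →
        (Matrix.of fun a b : {u : Fˣ // u ≠ 1} => φ (((b : Fˣ) : F) - ((a : Fˣ) : F))).det =
          -2 * (Fintype.card F : ℂ) ^ ((Fintype.card F - 5) / 2)) := by
  have hF : ringChar F ≠ 2 := fun h => by
    have := FiniteField.even_card_of_char_two h
    rw [Nat.odd_iff] at hodd
    omega
  have hφneg : φ (-1) = ZMod.χ₄ (Fintype.card F) := by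
    rw [MulChar.apply_eq_quadraticChar hφ1 hφ2, quadraticChar_neg_one hF]
  have hG : gaussSum φ e ^ 2 = φ (-1) * Fintype.card F :=
    gaussSum_sq hφ1 (MulChar.isQuadratic_iff_sq_eq_one.mpr hφ2) he
  have hdet := MulChar.det_of_sub_units_ne_one φ hφ1 he
  refine ⟨MulChar.det_of_sub_units_ne_one ψ hψ he, ?_, fun h1 => ?_⟩
  · have hGne : gaussSum φ e ≠ 0 := by
      rintro h
      rw [h, zero_pow two_ne_zero, eq_comm, mul_eq_zero] at hG
      exact hG.elim (isUnit_one.neg.map φ).ne_zero (NeZero.ne _)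
    rcases Nat.odd_mod_four_iff.mp (Nat.odd_iff.mp hodd) with h | h
    · simp [hdet, hφneg, ZMod.χ₄_nat_one_mod_four h, hGne, h]
    · simp [hdet, hφneg, ZMod.χ₄_nat_three_mod_four h, h]
  · rw [hφneg, ZMod.χ₄_nat_one_mod_four h1, Int.cast_one] at hG hdet
    have := Fintype.one_lt_card (α := F)
    have hpow : gaussSum φ e ^ (Fintype.card F - 1) =
        (Fintype.card F : ℂ) ^ 2 * (Fintype.card F : ℂ) ^ ((Fintype.card F - 5) / 2) := by
      rw [← pow_add, show Fintype.card F - 1 = 2 * (2 + (Fintype.card F - 5) / 2) by omega,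
        pow_mul, hG, one_mul]
    rw [hdet, hpow]
    field_simp
    ring

theorem det_D_q_minus (F : Type*) [Field F] [Fintype F] [DecidableEq F]
    (hodd : Odd (Fintype.card F)) (h3 : 3 ≤ Fintype.card F)
    (ψ : MulChar F ℂ) (hψ : ψ ≠ 1) (e : AddChar F ℂ) (he : e.IsPrimitive)
    (φ : MulChar F ℂ) (hφ2 : φ ^ 2 = 1) (hφ1 : φ ≠ 1) :
    (Matrix.of fun a b : {u : Fˣ // u ≠ 1} => ψ (((b : Fˣ) : F) - ((a : Fˣ) : F))).det =
        -((1 + ψ (-1)) / (Fintype.card F : ℂ) ^ 2) * gaussSum ψ e ^ (Fintype.card F - 1) ∧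
      ((Matrix.of fun a b : {u : Fˣ // u ≠ 1} => φ (((b : Fˣ) : F) - ((a : Fˣ) : F))).det = 0 ↔
        Fintype.card F % 4 = 3) ∧
      (Fintype.card F % 4 = 1 →
        (Matrix.of fun a b : {u : Fˣ // u ≠ 1} => φ (((b : Fˣ) : F) - ((a : Fˣ) : F))).det =
          -2 * (Fintype.card F : ℂ) ^ ((Fintype.card F - 5) / 2)) :=
  det_D_q_minus_general F hodd ψ hψ e he φ hφ2 hφ1
end
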